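/- arXiv:1404.7632 — 10 statements merged into one kernel-verified Lean document; each statement's English description precedes it below -/
import Mathlib

section
/- Assume τ_{i(T)} < T. Then m is a local maximum point of Q_T on (0, T) if and only if m < K·α. -/
/-! For `t ≤ m` the point `T - t` stays in the last cell, so
`Q_T(t) = σ²(m^{2D} - (m - t)^{2D})/t ≤ σ² m^{2D-1} = Q_T(m)`. For `t = m + s` it falls into the
previous cell, of length `α`, and `Q_T(m + s) ≤ Q_T(m)` becomes
`α^{2D} - (α - s)^{2D} ≤ m^{2D-1} s`.
By strict concavity of `x ↦ x^{2D}` the left difference quotient at `α` strictly exceeds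
`2D α^{2D-1}` and tends to it, so this holds for all small `s > 0` iff `2D α^{2D-1} < m^{2D-1}`,
which is `m < K α`. -/

open Filter Set Topology

lemma rpow_lt_tangent_line {p x y : ℝ} (hp : 0 < p) (hp1 : p < 1) (hx : 0 < x) (hy : 0 ≤ y)
    (hyx : y ≠ x) : y ^ p < x ^ p + p * x ^ (p - 1) * (y - x) := by
  have hs : -1 ≤ (y - x) / x := by rw [le_div_iff₀ hx]; linarith
  have hs0 : (y - x) / x ≠ 0 := div_ne_zero (sub_ne_zero.2 hyx) hx.ne'
  have h := rpow_one_add_lt_one_add_mul_self hs hs0 hp hp1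
  rw [one_add_div hx.ne', add_sub_cancel, Real.div_rpow hy hx.le,
    div_lt_iff₀ (by positivity)] at h
  calc y ^ p < (1 + p * ((y - x) / x)) * x ^ p := h
    _ = x ^ p + p * (x ^ p / x) * (y - x) := by field_simp
    _ = x ^ p + p * x ^ (p - 1) * (y - x) := by rw [Real.rpow_sub_one hx.ne']

lemma rpow_sub_rpow_le_mul_rpow_sub_one {p m u : ℝ} (hp : p ≤ 1) (hm : 0 < m) (hu : 0 ≤ u)
    (hum : u ≤ m) : m ^ p - u ^ p ≤ (m - u) * m ^ (p - 1) := by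
  suffices u * m ^ (p - 1) ≤ u ^ p by
    have hmp : m ^ p = m * m ^ (p - 1) := by rw [Real.rpow_sub_one hm.ne']; field_simp
    linarith
  rcases hu.eq_or_lt with rfl | hu
  · simpa using Real.rpow_nonneg le_rfl p
  · calc u * m ^ (p - 1) ≤ u * u ^ (p - 1) :=
          mul_le_mul_of_nonneg_left (Real.rpow_le_rpow_of_nonpos hu hum (by linarith)) hu.le
      _ = u ^ p := by rw [Real.rpow_sub_one hu.ne']; field_simp

lemma eventually_rpow_sub_rpow_sub_le_iff {p α L : ℝ} (hp : 0 < p) (hp1 : p < 1) (hα : 0 < α) :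
    (∀ᶠ s in 𝓝[>] 0, α ^ p - (α - s) ^ p ≤ L * s) ↔ p * α ^ (p - 1) < L := by
  constructor
  · intro h
    by_contra! hL
    obtain ⟨s, hs, hs0, hsα⟩ := (h.and (Ioo_mem_nhdsGT hα)).exists
    have := rpow_lt_tangent_line hp hp1 hα (sub_nonneg.2 hsα.le) (by linarith)
    linarith [mul_le_mul_of_nonneg_right hL hs0.le]
  · intro hL
    have hcont : ContinuousAt (fun s : ℝ => p * (α - s) ^ (p - 1)) 0 :=
      continuousAt_const.mul ((continuousAt_const.sub continuousAt_id).rpow_const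
        (Or.inl (by simpa using hα.ne')))
    have hlt : ∀ᶠ s in 𝓝 0, p * (α - s) ^ (p - 1) < L :=
      hcont.eventually_lt continuousAt_const (by simpa using hL)
    filter_upwards [nhdsWithin_le_nhds hlt, Ioo_mem_nhdsGT hα] with s hs ⟨hs0, hsα⟩
    have := rpow_lt_tangent_line hp hp1 (sub_pos.2 hsα) hα.le (by linarith)
    linarith [mul_lt_mul_of_pos_right hs hs0]

lemma lt_rpow_one_div_mul_iff {p m α : ℝ} (hp : 0 < p) (hp1 : p < 1) (hm : 0 < m) (hα : 0 < α) :
    m < (1 / p) ^ (1 / (1 - p)) * α ↔ p * α ^ (p - 1) < m ^ (p - 1) := by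
  have hq : 0 < 1 - p := by linarith
  rw [← div_lt_iff₀ hα, one_div (1 - p), Real.lt_rpow_inv_iff_of_pos (by positivity)
    (by positivity) hq, ← inv_div, Real.inv_rpow (by positivity), ← Real.rpow_neg (by positivity),
    neg_sub, Real.div_rpow hα.le hm.le, div_lt_div_iff₀ (by positivity) hp,
    one_mul, mul_comm]

theorem isLocalMax_div_iff_of_eq_rpow {p m α c ε : ℝ} (hp : 0 < p) (hp1 : p < 1) (hm : 0 < m)
    (hα : 0 < α) (hc : 0 < c) (hε : 0 < ε) {g : ℝ → ℝ}
    (hleft : ∀ t ∈ Ioc 0 m, g t = c * (m ^ p - (m - t) ^ p))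
    (hright : ∀ s ∈ Ioo 0 ε, g (m + s) = c * (m ^ p + α ^ p - (α - s) ^ p)) :
    IsLocalMax (fun t => g t / t) m ↔ p * α ^ (p - 1) < m ^ (p - 1) := by
  have hmp : m ^ p = m ^ (p - 1) * m := by rw [Real.rpow_sub_one hm.ne']; field_simp
  have hgm : g m / m = c * m ^ (p - 1) := by
    rw [hleft m ⟨hm, le_rfl⟩, sub_self, Real.zero_rpow hp.ne', sub_zero, hmp]; field_simp
  have hle : ∀ᶠ t in 𝓝[≤] m, g t / t ≤ g m / m := by
    filter_upwards [Ioc_mem_nhdsLE hm] with t ht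
    have := rpow_sub_rpow_le_mul_rpow_sub_one hp1.le hm (sub_nonneg.2 ht.2) (sub_le_self _ ht.1.le)
    rw [hgm, hleft t ht, div_le_iff₀ ht.1, mul_assoc]
    gcongr
    linarith
  have hgt : (∀ᶠ t in 𝓝[>] m, g t / t ≤ g m / m) ↔
      ∀ᶠ s in 𝓝[>] 0, α ^ p - (α - s) ^ p ≤ m ^ (p - 1) * s := by
    rw [show 𝓝[>] m = map (m + ·) (𝓝[>] 0) by simp, eventually_map]
    refine eventually_congr ?_
    filter_upwards [Ioo_mem_nhdsGT hε] with s hs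
    rw [hright s hs, hgm, div_le_iff₀ (by linarith [hs.1]), mul_assoc, mul_le_mul_iff_right₀ hc]
    constructor <;> intro h <;> linarith
  rw [IsLocalMax, IsMaxFilter, ← nhdsLE_sup_nhdsGT, eventually_sup, hgt,
    eventually_rpow_sub_rpow_sub_le_iff hp hp1 hα]
  exact and_iff_right hle

lemma StrictMono.eq_of_mem_Ico {τ : ℤ → ℝ} (hτ : StrictMono τ) {a b : ℤ} {t : ℝ}
    (ha : t ∈ Ico (τ a) (τ (a + 1))) (hb : t ∈ Ico (τ b) (τ (b + 1))) : a = b := by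
  have hab : a < b + 1 := hτ.lt_iff_lt.1 (ha.1.trans_lt hb.2)
  have hba : b < a + 1 := hτ.lt_iff_lt.1 (hb.1.trans_lt ha.2)
  omega

lemma I_eq_of_mem_Ico {D σ : ℝ} {τ : ℤ → ℝ} {i : ℝ → ℕ} {I : ℝ → ℝ} (hτ : StrictMono τ)
    (hi : ∀ t : ℝ, 0 ≤ t → τ (i t) ≤ t ∧ t < τ ((i t : ℤ) + 1))
    (hI : ∀ t : ℝ, 0 ≤ t →
      I t = σ^2 * ((t - τ (i t)) ^ (2*D)
        + (∑ k ∈ Finset.range (i t), (τ ((k : ℤ) + 1) - τ (k : ℤ)) ^ (2*D))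
        - (-τ 0) ^ (2*D)))
    {n : ℕ} {t : ℝ} (ht : 0 ≤ t) (htn : t ∈ Ico (τ n) (τ (n + 1))) :
    I t = σ^2 * ((t - τ n) ^ (2*D)
        + (∑ k ∈ Finset.range n, (τ ((k : ℤ) + 1) - τ (k : ℤ)) ^ (2*D))
        - (-τ 0) ^ (2*D)) := by
  have hit : i t = n := by exact_mod_cast hτ.eq_of_mem_Ico (hi t ht) htn
  rw [hI t ht, hit]

theorem localMax_iff_m_lt_K_alpha_general
    (D σ : ℝ) (hD : D ∈ Set.Ioo (0 : ℝ) (1/2)) (hσ : 0 < σ)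
    (τ : ℤ → ℝ) (hτmono : StrictMono τ) (hτ1 : 0 < τ 1)
    (i : ℝ → ℕ)
    (hi : ∀ t : ℝ, 0 ≤ t → τ (i t) ≤ t ∧ t < τ ((i t : ℤ) + 1))
    (I : ℝ → ℝ)
    (hI : ∀ t : ℝ, 0 ≤ t →
      I t = σ^2 * ((t - τ (i t)) ^ (2*D)
        + (∑ k ∈ Finset.range (i t), (τ ((k : ℤ) + 1) - τ (k : ℤ)) ^ (2*D))
        - (-τ 0) ^ (2*D)))
    (T : ℝ) (hiT : 1 ≤ i T) (hlast : τ (i T) < T)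
    (m α K : ℝ)
    (hm : m = T - τ (i T)) (hα : α = τ (i T) - τ ((i T : ℤ) - 1))
    (hK : K = (1 / (2*D)) ^ (1 / (1 - 2*D))) :
    IsLocalMaxOn (fun t : ℝ => (I T - I (T - t)) / t) (Set.Ioo 0 T) m ↔ m < K * α := by
  obtain ⟨n, hn⟩ : ∃ n : ℕ, i T = n + 1 := ⟨i T - 1, by omega⟩
  have hτT : 0 < τ (i T) := hτ1.trans_le (hτmono.monotone (by exact_mod_cast hiT))
  have hT : T ∈ Ico (τ (i T)) (τ (i T + 1)) := hi T (by linarith)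
  rw [hn] at hm hα hT hτT hlast
  push_cast at hm hα hT hτT hlast
  rw [add_sub_cancel_right] at hα
  have hm0 : 0 < m := by linarith
  have hα0 : 0 < α := by rw [hα]; exact sub_pos.2 (hτmono (lt_add_one _))
  have hIT :=
    I_eq_of_mem_Ico (n := n + 1) (t := T) hτmono hi hI (by linarith) (by exact_mod_cast hT)
  have hleft : ∀ t ∈ Ioc 0 m, I T - I (T - t) = σ^2 * (m ^ (2*D) - (m - t) ^ (2*D)) := by
    rintro t ⟨ht0, htm⟩
    rw [hIT, I_eq_of_mem_Ico (n := n + 1) hτmono hi hI (by linarith)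
      ⟨by push_cast; linarith, by push_cast; linarith [hT.2]⟩, hm]
    push_cast
    ring_nf
  have hright : ∀ s ∈ Ioo 0 (min α (τ (n + 1))),
      I T - I (T - (m + s)) = σ^2 * (m ^ (2*D) + α ^ (2*D) - (α - s) ^ (2*D)) := by
    rintro s ⟨hs0, hs⟩
    rw [lt_min_iff] at hs
    rw [hIT, I_eq_of_mem_Ico hτmono hi hI (by linarith) ⟨by linarith, by linarith⟩,
      Finset.sum_range_succ, hm, hα]
    push_cast
    ring_nf
  obtain ⟨hD0, hD1⟩ := hD
  rw [hK, lt_rpow_one_div_mul_iff (by linarith) (by linarith) hm0 hα0,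
    ← isLocalMax_div_iff_of_eq_rpow (by linarith) (by linarith) hm0 hα0 (by positivity)
      (lt_min hα0 (by exact_mod_cast hτT)) hleft hright]
  exact ⟨fun h => h.isLocalMax (Ioo_mem_nhds hm0 (by linarith)), fun h => h.on _⟩

/-- Assume `τ_{i(T)} < T`. Then `m = T − τ_{i(T)}` is a local maximum
point of `Q_T(t) = (I(T) − I(T−t))/t` on `(0, T)` if and only if `m < K·α`, where
`α = τ_{i(T)} − τ_{i(T)−1}` and `K = (1/(2D))^{1/(1−2D)}`. -/
theorem localMax_iff_m_lt_K_alpha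
    (D σ : ℝ) (hD : D ∈ Set.Ioo (0 : ℝ) (1/2)) (hσ : 0 < σ)
    (τ : ℤ → ℝ) (hτmono : StrictMono τ) (hτ0 : τ 0 < 0) (hτ1 : 0 < τ 1)
    (hτtop : Tendsto τ atTop atTop) (hτbot : Tendsto τ atBot atBot)
    (i : ℝ → ℕ)
    (hi : ∀ t : ℝ, 0 ≤ t → τ (i t) ≤ t ∧ t < τ ((i t : ℤ) + 1))
    (I : ℝ → ℝ)
    (hI : ∀ t : ℝ, 0 ≤ t →
      I t = σ^2 * ((t - τ (i t)) ^ (2*D)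
        + (∑ k ∈ Finset.range (i t), (τ ((k : ℤ) + 1) - τ (k : ℤ)) ^ (2*D))
        - (-τ 0) ^ (2*D)))
    (T : ℝ) (hT : 0 < T) (hiT : 1 ≤ i T) (hlast : τ (i T) < T)
    (m α K : ℝ)
    (hm : m = T - τ (i T)) (hα : α = τ (i T) - τ ((i T : ℤ) - 1))
    (hK : K = (1 / (2*D)) ^ (1 / (1 - 2*D))) :
    IsLocalMaxOn (fun t : ℝ => (I T - I (T - t)) / t) (Set.Ioo 0 T) m ↔ m < K * α :=
  localMax_iff_m_lt_K_alpha_general D σ hD hσ τ hτmono hτ1 i hi I hI T hiT hlast m α K hm hα hK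
end

section
/- Assume τ_{i(T)} < T. For every t ∈ (0, m), Q_T is differentiable at t with Q_T′(t) = (2Dσ²(T − t − τ_{i(T)})^{2D−1}·t − (I(T) − I(T−t)))/t², and Q_T′(t) > 0. In particular Q_T is strictly increasing on (0, m). -/
open Filter Set

/-!
On `[τ_{i(T)}, T]` no grid point is crossed, so with `m = T - τ_{i(T)}` and `p = 2D` we have
`I(T) - I(T - u) = σ² (m^p - (m - u)^p)` for `u ∈ (0, m)`. The quotient rule gives the stated
derivative, whose numerator `σ² (p (m - t)^{p-1} t - (m^p - (m - t)^p))` is positive because the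
strictly concave function `x ↦ x^p` lies strictly below its tangent line at `m - t`.
-/

theorem Real.rpow_add_lt_rpow_add_mul_rpow_sub_one {p b t : ℝ} (hp0 : 0 < p) (hp1 : p < 1)
    (hb : 0 < b) (ht : 0 < t) : (b + t) ^ p < b ^ p + p * b ^ (p - 1) * t := by
  have hbernoulli := rpow_one_add_lt_one_add_mul_self (s := t / b)
    (by linarith [div_pos ht hb]) (div_pos ht hb).ne' hp0 hp1
  calc (b + t) ^ p = (1 + t / b) ^ p * b ^ p := by
        rw [← Real.mul_rpow (by positivity) hb.le]
        congr 1
        field_simp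
    _ < (1 + p * (t / b)) * b ^ p := mul_lt_mul_of_pos_right hbernoulli (by positivity)
    _ = b ^ p + p * b ^ (p - 1) * t := by
        rw [Real.rpow_sub hb p 1, Real.rpow_one]
        field_simp

section IncrementQuotient

variable {a p c t : ℝ}

theorem hasDerivAt_rpow_increment_div (ht : 0 < t) (htc : t < c) :
    HasDerivAt (fun u : ℝ => a * (c ^ p - (c - u) ^ p) / u)
      ((p * a * (c - t) ^ (p - 1) * t - a * (c ^ p - (c - t) ^ p)) / t ^ 2) t := by
  have hsub : HasDerivAt (fun u : ℝ => c - u) (-1) t := by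
    simpa using (hasDerivAt_id t).const_sub c
  have hpow : HasDerivAt (fun u : ℝ => (c - u) ^ p) (p * (c - t) ^ (p - 1) * (-1)) t :=
    (Real.hasDerivAt_rpow_const (Or.inl (sub_pos.2 htc).ne')).comp t hsub
  refine (((hpow.const_sub (c ^ p)).const_mul a).div (hasDerivAt_id' t) ht.ne').congr_deriv ?_
  ring

theorem rpow_increment_div_deriv_pos (hp0 : 0 < p) (hp1 : p < 1) (ha : 0 < a) (ht : 0 < t)
    (htc : t < c) : 0 < (p * a * (c - t) ^ (p - 1) * t - a * (c ^ p - (c - t) ^ p)) / t ^ 2 := by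
  have htangent := Real.rpow_add_lt_rpow_add_mul_rpow_sub_one hp0 hp1 (sub_pos.2 htc) ht
  rw [sub_add_cancel] at htangent
  have : 0 < p * a * (c - t) ^ (p - 1) * t - a * (c ^ p - (c - t) ^ p) := by nlinarith
  positivity

end IncrementQuotient

theorem StrictMono.le_of_le_of_lt_add_one {τ : ℤ → ℝ} (hτ : StrictMono τ) {n k : ℤ} {s : ℝ}
    (hn : τ n ≤ s) (hk : s < τ (k + 1)) : n ≤ k :=
  Int.lt_add_one_iff.mp (hτ.lt_iff_lt.mp (hn.trans_lt hk))

section Increment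

variable {τ : ℤ → ℝ} {i : ℝ → ℕ} {I : ℝ → ℝ} {σ p T u : ℝ}

theorem index_sub_eq_index (hτ : StrictMono τ)
    (hi : ∀ t : ℝ, 0 ≤ t → τ (i t) ≤ t ∧ t < τ ((i t : ℤ) + 1))
    (hτT : 0 ≤ τ (i T)) (hu0 : 0 < u) (hu : u < T - τ (i T)) : i (T - u) = i T := by
  have hiT := hi T (by linarith)
  have hiTu := hi (T - u) (by linarith)
  have hle : (i (T - u) : ℤ) ≤ i T := hτ.le_of_le_of_lt_add_one hiTu.1 (by linarith [hiT.2])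
  have hge : (i T : ℤ) ≤ i (T - u) := hτ.le_of_le_of_lt_add_one (by linarith) hiTu.2
  exact_mod_cast le_antisymm hle hge

theorem increment_eq_rpow_sub (hτ : StrictMono τ)
    (hi : ∀ t : ℝ, 0 ≤ t → τ (i t) ≤ t ∧ t < τ ((i t : ℤ) + 1))
    (hI : ∀ t : ℝ, 0 ≤ t →
      I t = σ ^ 2 * ((t - τ (i t)) ^ p
        + (∑ k ∈ Finset.range (i t), (τ ((k : ℤ) + 1) - τ (k : ℤ)) ^ p) - (-τ 0) ^ p))
    (hτT : 0 ≤ τ (i T)) (hu0 : 0 < u) (hu : u < T - τ (i T)) :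
    I T - I (T - u) = σ ^ 2 * ((T - τ (i T)) ^ p - (T - τ (i T) - u) ^ p) := by
  rw [hI T (by linarith), hI (T - u) (by linarith), index_sub_eq_index hτ hi hτT hu0 hu,
    sub_right_comm T u]
  ring

end Increment

theorem QT_deriv_pos_before_m_general
    (D σ : ℝ) (hD : D ∈ Set.Ioo (0 : ℝ) (1/2)) (hσ : 0 < σ)
    (τ : ℤ → ℝ) (hτmono : StrictMono τ) (hτ1 : 0 < τ 1)
    (i : ℝ → ℕ)
    (hi : ∀ t : ℝ, 0 ≤ t → τ (i t) ≤ t ∧ t < τ ((i t : ℤ) + 1))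
    (I : ℝ → ℝ)
    (hI : ∀ t : ℝ, 0 ≤ t →
      I t = σ^2 * ((t - τ (i t)) ^ (2*D)
        + (∑ k ∈ Finset.range (i t), (τ ((k : ℤ) + 1) - τ (k : ℤ)) ^ (2*D))
        - (-τ 0) ^ (2*D)))
    (T : ℝ) (hiT : 1 ≤ i T)
    (m : ℝ) (hm : m = T - τ (i T)) :
    (∀ t ∈ Set.Ioo (0 : ℝ) m,
        HasDerivAt (fun u : ℝ => (I T - I (T - u)) / u)
          ((2*D*σ^2 * (T - t - τ (i T)) ^ (2*D - 1) * t - (I T - I (T - t))) / t^2) t ∧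
        0 < (2*D*σ^2 * (T - t - τ (i T)) ^ (2*D - 1) * t - (I T - I (T - t))) / t^2) ∧
    StrictMonoOn (fun u : ℝ => (I T - I (T - u)) / u) (Set.Ioo 0 m) := by
  subst hm
  have hτT : 0 ≤ τ (i T) := hτ1.le.trans (hτmono.monotone (by exact_mod_cast hiT))
  have hincr : ∀ u ∈ Ioo 0 (T - τ (i T)), I T - I (T - u)
      = σ ^ 2 * ((T - τ (i T)) ^ (2 * D) - (T - τ (i T) - u) ^ (2 * D)) :=
    fun u hu => increment_eq_rpow_sub hτmono hi hI hτT hu.1 hu.2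
  have hderiv : ∀ t ∈ Ioo 0 (T - τ (i T)),
      HasDerivAt (fun u : ℝ => (I T - I (T - u)) / u)
        ((2*D*σ^2 * (T - t - τ (i T)) ^ (2*D - 1) * t - (I T - I (T - t))) / t^2) t ∧
      0 < (2*D*σ^2 * (T - t - τ (i T)) ^ (2*D - 1) * t - (I T - I (T - t))) / t^2 := by
    intro t ht
    rw [hincr t ht, sub_right_comm T t]
    refine ⟨(hasDerivAt_rpow_increment_div ht.1 ht.2).congr_of_eventuallyEq ?_,
      rpow_increment_div_deriv_pos (by linarith [hD.1]) (by linarith [hD.2]) (by positivity)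
        ht.1 ht.2⟩
    filter_upwards [isOpen_Ioo.mem_nhds ht] with u hu
    rw [hincr u hu]
  refine ⟨hderiv, strictMonoOn_of_deriv_pos (convex_Ioo _ _)
    (fun t ht => (hderiv t ht).1.continuousAt.continuousWithinAt) fun t ht => ?_⟩
  rw [interior_Ioo] at ht
  exact (hderiv t ht).1.deriv ▸ (hderiv t ht).2

/-- Assume `τ_{i(T)} < T`. For every `t ∈ (0, m)`, `Q_T` is
differentiable at `t` with
`Q_T′(t) = (2Dσ²(T − t − τ_{i(T)})^{2D−1}·t − (I(T) − I(T−t)))/t²`, and `Q_T′(t) > 0`.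
In particular `Q_T` is strictly increasing on `(0, m)`. -/
theorem QT_deriv_pos_before_m
    (D σ : ℝ) (hD : D ∈ Set.Ioo (0 : ℝ) (1/2)) (hσ : 0 < σ)
    (τ : ℤ → ℝ) (hτmono : StrictMono τ) (hτ0 : τ 0 < 0) (hτ1 : 0 < τ 1)
    (hτtop : Tendsto τ atTop atTop) (hτbot : Tendsto τ atBot atBot)
    (i : ℝ → ℕ)
    (hi : ∀ t : ℝ, 0 ≤ t → τ (i t) ≤ t ∧ t < τ ((i t : ℤ) + 1))
    (I : ℝ → ℝ)
    (hI : ∀ t : ℝ, 0 ≤ t →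
      I t = σ^2 * ((t - τ (i t)) ^ (2*D)
        + (∑ k ∈ Finset.range (i t), (τ ((k : ℤ) + 1) - τ (k : ℤ)) ^ (2*D))
        - (-τ 0) ^ (2*D)))
    (T : ℝ) (hT : 0 < T) (hiT : 1 ≤ i T) (hlast : τ (i T) < T)
    (m : ℝ) (hm : m = T - τ (i T)) :
    (∀ t ∈ Set.Ioo (0 : ℝ) m,
        HasDerivAt (fun u : ℝ => (I T - I (T - u)) / u)
          ((2*D*σ^2 * (T - t - τ (i T)) ^ (2*D - 1) * t - (I T - I (T - t))) / t^2) t ∧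
        0 < (2*D*σ^2 * (T - t - τ (i T)) ^ (2*D - 1) * t - (I T - I (T - t))) / t^2) ∧
    StrictMonoOn (fun u : ℝ => (I T - I (T - u)) / u) (Set.Ioo 0 m) :=
  QT_deriv_pos_before_m_general D σ hD hσ τ hτmono hτ1 i hi I hI T hiT m hm
end

section
/- Assume τ_{i(T)} < T. For every t ∈ (m, T) with T − t > τ_{i(T)−1}, Q_T is differentiable at t with Q_T′(t) = (2Dσ²(T − t − τ_{i(T)−1})^{2D−1}·t − (I(T) − I(T−t)))/t². Moreover lim_{t→m⁺} Q_T′(t) = (σ²/m²)·(2Dα^{2D−1}·m − m^{2D}), and this limit is negative if and only if m < K·α, zero if and only if m = K·α, and positive if and only if m > K·α. -/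
/-!
For `u ∈ (m, min T (T - τ_{i(T)-1}))` the point `T - u` lies in the previous inter-arrival
interval, so `I(T) - I(T - u) = σ²(m^{2D} + α^{2D} - (T - τ_{i(T)-1} - u)^{2D})` is an explicit
smooth function of `u`, and the quotient rule gives `Q_T′`. This expression is continuous at
`u = m`, where `T - τ_{i(T)-1} - m = α`, which yields the right limit. With `p = 2D` we have
`K^{p-1} = p`, so the limit equals `σ²/m · ((Kα)^{p-1} - m^{p-1})`, whose sign is that of
`m - Kα` because `x ↦ x^{p-1}` is strictly decreasing.
-/

open Filter Set Topology

namespace Real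

lemma sign_rpow_sub_rpow_of_neg {x y z : ℝ} (hx : 0 < x) (hy : 0 < y) (hz : z < 0) :
    SignType.sign (x ^ z - y ^ z) = SignType.sign (y - x) := by
  rcases lt_trichotomy x y with hxy | rfl | hxy
  · rw [sign_pos (sub_pos.2 hxy),
      sign_pos (sub_pos.2 ((rpow_lt_rpow_iff_of_neg hy hx hz).2 hxy))]
  · simp
  · rw [_root_.sign_neg (sub_neg.2 hxy),
      _root_.sign_neg (sub_neg.2 ((rpow_lt_rpow_iff_of_neg hx hy hz).2 hxy))]

lemma inv_rpow_inv_one_sub_rpow_sub_one {p : ℝ} (hp : 0 < p) (hp1 : p < 1) :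
    ((1 / p) ^ (1 / (1 - p))) ^ (p - 1) = p := by
  have hexp : 1 / (1 - p) * (p - 1) = -1 := by
    field_simp [(sub_pos.2 hp1).ne']
    ring
  rw [← rpow_mul (by positivity), hexp, rpow_neg_one, one_div, inv_inv]

lemma sign_mul_rpow_mul_sub_rpow {p α m : ℝ} (hp : 0 < p) (hp1 : p < 1) (hα : 0 < α)
    (hm : 0 < m) :
    SignType.sign (p * α ^ (p - 1) * m - m ^ p) =
      SignType.sign (m - (1 / p) ^ (1 / (1 - p)) * α) := by
  set K := (1 / p) ^ (1 / (1 - p))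
  have hK : 0 < K := by positivity
  have hfactor : p * α ^ (p - 1) * m - m ^ p = ((K * α) ^ (p - 1) - m ^ (p - 1)) * m := by
    rw [mul_rpow hK.le hα.le, inv_rpow_inv_one_sub_rpow_sub_one hp hp1, sub_mul,
      ← rpow_add_one hm.ne', sub_add_cancel]
  rw [hfactor, sign_mul, sign_pos hm, mul_one,
    sign_rpow_sub_rpow_of_neg (by positivity) hm (by linarith)]

end Real

lemma neg_zero_pos_iff_of_sign_eq_sign_sub {L a b : ℝ}
    (h : SignType.sign L = SignType.sign (a - b)) :
    (L < 0 ↔ a < b) ∧ (L = 0 ↔ a = b) ∧ (0 < L ↔ b < a) := by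
  refine ⟨?_, ?_, ?_⟩
  · rw [← sign_eq_neg_one_iff, h, sign_eq_neg_one_iff, sub_neg]
  · rw [← sign_eq_zero_iff, h, sign_eq_zero_iff, sub_eq_zero]
  · rw [← sign_eq_one_iff, h, sign_eq_one_iff, sub_pos]

lemma tendsto_deriv_nhdsGT_of_hasDerivAt {f f' : ℝ → ℝ} {a b : ℝ} (hab : a < b)
    (hf : ∀ t ∈ Ioo a b, HasDerivAt f (f' t) t) (hf' : ContinuousAt f' a) :
    Tendsto (deriv f) (𝓝[>] a) (𝓝 (f' a)) := by
  refine (hf'.tendsto.mono_left nhdsWithin_le_nhds).congr' ?_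
  filter_upwards [Ioo_mem_nhdsGT hab] with t ht
  exact (hf t ht).deriv.symm

lemma hasDerivAt_div_of_eqOn_Ioo {F : ℝ → ℝ} {C A p c a b t : ℝ}
    (hF : ∀ u ∈ Ioo a b, F u = C * (A - (c - u) ^ p)) (ht : t ∈ Ioo a b) (htc : t < c)
    (ht0 : t ≠ 0) :
    HasDerivAt (fun u => F u / u)
      ((p * C * (c - t) ^ (p - 1) * t - C * (A - (c - t) ^ p)) / t ^ 2) t := by
  have hbase : HasDerivAt (fun u => (c - u) ^ p) (-1 * p * (c - t) ^ (p - 1)) t :=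
    ((hasDerivAt_id t).const_sub c).rpow_const (Or.inl (sub_pos.2 htc).ne')
  refine (((hbase.const_sub A).const_mul C).fun_div (hasDerivAt_id' t) ht0).congr_deriv
    (by ring) |>.congr_of_eventuallyEq ?_
  filter_upwards [isOpen_Ioo.mem_nhds ht] with u hu
  rw [hF u hu]

section PiecewiseVariance

variable {τ : ℤ → ℝ} {i : ℝ → ℕ}

lemma index_eq_of_mem_Ico (hτ : StrictMono τ)
    (hi : ∀ t : ℝ, 0 ≤ t → τ (i t) ≤ t ∧ t < τ ((i t : ℤ) + 1)) {s : ℝ} (hs : 0 ≤ s) {k : ℕ}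
    (hk : τ k ≤ s) (hk1 : s < τ ((k : ℤ) + 1)) : i s = k := by
  obtain ⟨hs1, hs2⟩ := hi s hs
  have : (i s : ℤ) < k + 1 := hτ.lt_iff_lt.1 (hs1.trans_lt hk1)
  have : (k : ℤ) < i s + 1 := hτ.lt_iff_lt.1 (hk.trans_lt hs2)
  omega

lemma sub_eq_of_index_eq_add_one {D σ : ℝ} {I : ℝ → ℝ} (hτ : StrictMono τ)
    (hi : ∀ t : ℝ, 0 ≤ t → τ (i t) ≤ t ∧ t < τ ((i t : ℤ) + 1))
    (hI : ∀ t : ℝ, 0 ≤ t →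
      I t = σ^2 * ((t - τ (i t)) ^ (2*D)
        + (∑ k ∈ Finset.range (i t), (τ ((k : ℤ) + 1) - τ (k : ℤ)) ^ (2*D))
        - (-τ 0) ^ (2*D)))
    {T s : ℝ} {k : ℕ} (hT : 0 ≤ T) (hiT : i T = k + 1) (hs : 0 ≤ s) (hk : τ k ≤ s)
    (hk1 : s < τ ((k : ℤ) + 1)) :
    I T - I s = σ^2 * ((T - τ ((k : ℤ) + 1)) ^ (2*D) + (τ ((k : ℤ) + 1) - τ k) ^ (2*D)
      - (s - τ k) ^ (2*D)) := by
  rw [hI T hT, hI s hs, hiT, index_eq_of_mem_Ico hτ hi hs hk hk1, Finset.sum_range_succ]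
  push_cast
  ring

end PiecewiseVariance

theorem QT_deriv_after_m_and_right_limit_general
    (D σ : ℝ) (hD : D ∈ Set.Ioo (0 : ℝ) (1/2)) (hσ : 0 < σ)
    (τ : ℤ → ℝ) (hτmono : StrictMono τ) (hτ1 : 0 < τ 1)
    (i : ℝ → ℕ)
    (hi : ∀ t : ℝ, 0 ≤ t → τ (i t) ≤ t ∧ t < τ ((i t : ℤ) + 1))
    (I : ℝ → ℝ)
    (hI : ∀ t : ℝ, 0 ≤ t →
      I t = σ^2 * ((t - τ (i t)) ^ (2*D)
        + (∑ k ∈ Finset.range (i t), (τ ((k : ℤ) + 1) - τ (k : ℤ)) ^ (2*D))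
        - (-τ 0) ^ (2*D)))
    (T : ℝ) (hiT : 1 ≤ i T) (hlast : τ (i T) < T)
    (m α K L : ℝ)
    (hm : m = T - τ (i T)) (hα : α = τ (i T) - τ ((i T : ℤ) - 1))
    (hK : K = (1 / (2*D)) ^ (1 / (1 - 2*D)))
    (hL : L = σ^2 / m^2 * (2*D*α ^ (2*D - 1) * m - m ^ (2*D))) :
    (∀ t ∈ Set.Ioo m T, τ ((i T : ℤ) - 1) < T - t →
        HasDerivAt (fun u : ℝ => (I T - I (T - u)) / u)
          ((2*D*σ^2 * (T - t - τ ((i T : ℤ) - 1)) ^ (2*D - 1) * t - (I T - I (T - t))) / t^2)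
          t) ∧
    Tendsto (fun t : ℝ => deriv (fun u : ℝ => (I T - I (T - u)) / u) t)
      (nhdsWithin m (Set.Ioi m)) (nhds L) ∧
    (L < 0 ↔ m < K * α) ∧ (L = 0 ↔ m = K * α) ∧ (0 < L ↔ K * α < m) := by
  obtain ⟨hD0, hD1⟩ := hD
  obtain ⟨k, hk⟩ : ∃ k, i T = k + 1 := Nat.exists_eq_add_of_le' hiT
  simp only [hk, Nat.cast_add, Nat.cast_one, add_sub_cancel_right] at hm hα hlast ⊢
  have hα0 : 0 < α := hα ▸ sub_pos.2 (hτmono (lt_add_one _))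
  have hm0 : 0 < m := hm ▸ sub_pos.2 hlast
  have hmT : m < T := by
    have : τ 1 ≤ τ ((k : ℤ) + 1) := hτmono.monotone (by omega)
    linarith
  set b := min T (T - τ k)
  have hmb : m < b := lt_min hmT (by linarith)
  have hQ : ∀ u ∈ Ioo m b,
      I T - I (T - u) = σ^2 * (m ^ (2*D) + α ^ (2*D) - (T - τ k - u) ^ (2*D)) := by
    intro u ⟨hmu, hub⟩
    have hub' := lt_min_iff.1 hub
    rw [sub_eq_of_index_eq_add_one hτmono hi hI (by linarith) hk (by linarith) (by linarith)
      (by linarith), ← hm, ← hα, sub_right_comm]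
  have hderiv : ∀ t ∈ Ioo m b, HasDerivAt (fun u : ℝ => (I T - I (T - u)) / u)
      ((2*D*σ^2 * (T - τ k - t) ^ (2*D - 1) * t
        - σ^2 * (m ^ (2*D) + α ^ (2*D) - (T - τ k - t) ^ (2*D))) / t^2) t :=
    fun t ht => hasDerivAt_div_of_eqOn_Ioo hQ ht (lt_min_iff.1 ht.2).2 (hm0.trans ht.1).ne'
  refine ⟨fun t ht hτt => ?_, ?_, ?_⟩
  · have htb : t ∈ Ioo m b := ⟨ht.1, lt_min ht.2 (by linarith)⟩
    exact (hderiv t htb).congr_deriv (by rw [hQ t htb, sub_right_comm T t])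
  · have hTm : T - τ k - m = α := by rw [hm, hα]; ring
    have hcont : ContinuousAt (fun t => (2*D*σ^2 * (T - τ k - t) ^ (2*D - 1) * t
        - σ^2 * (m ^ (2*D) + α ^ (2*D) - (T - τ k - t) ^ (2*D))) / t^2) m := by
      have hbase : T - τ k - m ≠ 0 := hTm ▸ hα0.ne'
      fun_prop (disch := first | exact Or.inl hbase | positivity)
    convert tendsto_deriv_nhdsGT_of_hasDerivAt hmb hderiv hcont using 2
    rw [hL, hTm]
    field_simp
    ring
  · refine neg_zero_pos_iff_of_sign_eq_sign_sub ?_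
    rw [hL, sign_mul, sign_pos (by positivity), one_mul, hK]
    exact Real.sign_mul_rpow_mul_sub_rpow (by linarith) (by linarith) hα0 hm0

/-- Assume `τ_{i(T)} < T`. For every `t ∈ (m, T)` with
`T − t > τ_{i(T)−1}`, `Q_T` is differentiable at `t` with
`Q_T′(t) = (2Dσ²(T − t − τ_{i(T)−1})^{2D−1}·t − (I(T) − I(T−t)))/t²`. Moreover
`lim_{t→m⁺} Q_T′(t) = (σ²/m²)·(2Dα^{2D−1}·m − m^{2D})`, and this limit is negative iff
`m < K·α`, zero iff `m = K·α`, and positive iff `m > K·α`. -/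
theorem QT_deriv_after_m_and_right_limit
    (D σ : ℝ) (hD : D ∈ Set.Ioo (0 : ℝ) (1/2)) (hσ : 0 < σ)
    (τ : ℤ → ℝ) (hτmono : StrictMono τ) (hτ0 : τ 0 < 0) (hτ1 : 0 < τ 1)
    (hτtop : Tendsto τ atTop atTop) (hτbot : Tendsto τ atBot atBot)
    (i : ℝ → ℕ)
    (hi : ∀ t : ℝ, 0 ≤ t → τ (i t) ≤ t ∧ t < τ ((i t : ℤ) + 1))
    (I : ℝ → ℝ)
    (hI : ∀ t : ℝ, 0 ≤ t →
      I t = σ^2 * ((t - τ (i t)) ^ (2*D)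
        + (∑ k ∈ Finset.range (i t), (τ ((k : ℤ) + 1) - τ (k : ℤ)) ^ (2*D))
        - (-τ 0) ^ (2*D)))
    (T : ℝ) (hT : 0 < T) (hiT : 1 ≤ i T) (hlast : τ (i T) < T)
    (m α K L : ℝ)
    (hm : m = T - τ (i T)) (hα : α = τ (i T) - τ ((i T : ℤ) - 1))
    (hK : K = (1 / (2*D)) ^ (1 / (1 - 2*D)))
    (hL : L = σ^2 / m^2 * (2*D*α ^ (2*D - 1) * m - m ^ (2*D))) :
    (∀ t ∈ Set.Ioo m T, τ ((i T : ℤ) - 1) < T - t →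
        HasDerivAt (fun u : ℝ => (I T - I (T - u)) / u)
          ((2*D*σ^2 * (T - t - τ ((i T : ℤ) - 1)) ^ (2*D - 1) * t - (I T - I (T - t))) / t^2)
          t) ∧
    Tendsto (fun t : ℝ => deriv (fun u : ℝ => (I T - I (T - u)) / u) t)
      (nhdsWithin m (Set.Ioi m)) (nhds L) ∧
    (L < 0 ↔ m < K * α) ∧ (L = 0 ↔ m = K * α) ∧ (0 < L ↔ K * α < m) :=
  QT_deriv_after_m_and_right_limit_general D σ hD hσ τ hτmono hτ1 i hi I hI T hiT hlast m α K L hm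
    hα hK hL
end

section
/- Assume i(T) ≥ 2 and τ_{i(T)} < T. Then m + α ∈ (0, T) and Q_T(m) − Q_T(m+α) = σ²·(α·m^{2D} − m·α^{2D})/(m·(m+α)). Consequently, for each fixed α > 0 and σ > 0, the function m ↦ σ²·(α·m^{2D} − m·α^{2D})/(m·(m+α)) tends to +∞ as m → 0⁺. -/
/-!
Write `n = i(T)`. Then `T - m = τₙ` and `T - (m + α) = τₙ₋₁` are nonnegative nodes, and at a node
the running term `(t - τ_{i(t)})^{2D}` of `I` vanishes, so `I(T) - I(T - m) = σ² m^{2D}` and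
`I(T) - I(T - (m + α)) = σ² (m^{2D} + α^{2D})`. After dividing by `m`, the gap is
`σ² (α m^{2D-1} - α^{2D}) / (m + α)`, which blows up as `m → 0⁺` because `2D < 1`.
-/

open Filter Topology

theorem StrictMono.eq_of_le_of_lt_add_one {β : Type*} [Preorder β] {τ : ℤ → β}
    (hτ : StrictMono τ) {j k : ℤ} (hjk : τ j ≤ τ k) (hkj : τ k < τ (j + 1)) : j = k := by
  have := hτ.le_iff_le.1 hjk
  have := hτ.lt_iff_lt.1 hkj
  omega

def IsLastNodeIndex (τ : ℤ → ℝ) (i : ℝ → ℕ) : Prop :=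
  ∀ t : ℝ, 0 ≤ t → τ (i t) ≤ t ∧ t < τ ((i t : ℤ) + 1)

def IsCumulativeVariance (D σ : ℝ) (τ : ℤ → ℝ) (i : ℝ → ℕ) (I : ℝ → ℝ) : Prop :=
  ∀ t : ℝ, 0 ≤ t →
    I t = σ^2 * ((t - τ (i t)) ^ (2*D)
      + (∑ k ∈ Finset.range (i t), (τ ((k : ℤ) + 1) - τ (k : ℤ)) ^ (2*D))
      - (-τ 0) ^ (2*D))

section CumulativeVariance

variable {D σ : ℝ} {τ : ℤ → ℝ} {i : ℝ → ℕ} {I : ℝ → ℝ}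

theorem IsLastNodeIndex.apply_node (hτ : StrictMono τ) (hi : IsLastNodeIndex τ i) {k : ℕ}
    (hk : 0 ≤ τ k) : i (τ k) = k := by
  obtain ⟨h₁, h₂⟩ := hi (τ k) hk
  exact_mod_cast hτ.eq_of_le_of_lt_add_one h₁ h₂

theorem IsCumulativeVariance.apply_node (hD : D ≠ 0) (hτ : StrictMono τ)
    (hi : IsLastNodeIndex τ i) (hI : IsCumulativeVariance D σ τ i I) {n : ℕ} (hn : 0 ≤ τ n) :
    I (τ n) = σ^2 * ((∑ k ∈ Finset.range n, (τ ((k : ℤ) + 1) - τ (k : ℤ)) ^ (2*D))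
      - (-τ 0) ^ (2*D)) := by
  rw [hI _ hn, hi.apply_node hτ hn, sub_self, Real.zero_rpow (mul_ne_zero two_ne_zero hD),
    zero_add]

theorem IsCumulativeVariance.sub_apply_lastNode (hD : D ≠ 0) (hτ : StrictMono τ)
    (hi : IsLastNodeIndex τ i) (hI : IsCumulativeVariance D σ τ i I) {t : ℝ} (ht : 0 ≤ t)
    (hit : 0 ≤ τ (i t)) :
    I t - I (τ (i t)) = σ^2 * (t - τ (i t)) ^ (2*D) := by
  rw [hI t ht, hI.apply_node hD hτ hi hit]
  ring

theorem IsCumulativeVariance.apply_node_succ_sub (hD : D ≠ 0) (hτ : StrictMono τ)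
    (hi : IsLastNodeIndex τ i) (hI : IsCumulativeVariance D σ τ i I) {k : ℕ} (hk : 0 ≤ τ k) :
    I (τ (k + 1)) - I (τ k) = σ^2 * (τ (k + 1) - τ k) ^ (2*D) := by
  have hlastIncrement := hI.apply_node hD hτ hi (hk.trans (hτ.monotone (by omega : (k : ℤ) ≤ (k + 1 : ℕ))))
  push_cast at hlastIncrement
  rw [hlastIncrement, hI.apply_node hD hτ hi hk, Finset.sum_range_succ]
  ring

end CumulativeVariance

theorem tendsto_gap_nhdsGT_zero {p a c : ℝ} (hp : p < 1) (ha : 0 < a) (hc : 0 < c) :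
    Tendsto (fun x : ℝ => c * (a * x ^ p - x * a ^ p) / (x * (x + a))) (𝓝[>] 0) atTop := by
  have hnum : Tendsto (fun x : ℝ => c * (a * x ^ (p - 1) - a ^ p)) (𝓝[>] 0) atTop :=
    (tendsto_atTop_add_const_right _ _
      ((tendsto_rpow_neg_nhdsGT_zero (sub_neg.2 hp)).const_mul_atTop ha)).const_mul_atTop hc
  have hden : Tendsto (fun x : ℝ => (x + a)⁻¹) (𝓝[>] 0) (𝓝 a⁻¹) :=
    (((continuous_add_const a).tendsto' 0 a (zero_add a)).mono_left nhdsWithin_le_nhds).inv₀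
      ha.ne'
  refine (hnum.atTop_mul_pos (inv_pos.2 ha) hden).congr' ?_
  filter_upwards [self_mem_nhdsWithin] with x (hx : 0 < x)
  rw [Real.rpow_sub_one hx.ne']
  field_simp

theorem QT_gap_at_m_plus_alpha_general
    (D σ : ℝ) (hD : D ∈ Set.Ioo (0 : ℝ) (1/2)) (hσ : 0 < σ)
    (τ : ℤ → ℝ) (hτmono : StrictMono τ) (hτ1 : 0 < τ 1)
    (i : ℝ → ℕ)
    (hi : ∀ t : ℝ, 0 ≤ t → τ (i t) ≤ t ∧ t < τ ((i t : ℤ) + 1))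
    (I : ℝ → ℝ)
    (hI : ∀ t : ℝ, 0 ≤ t →
      I t = σ^2 * ((t - τ (i t)) ^ (2*D)
        + (∑ k ∈ Finset.range (i t), (τ ((k : ℤ) + 1) - τ (k : ℤ)) ^ (2*D))
        - (-τ 0) ^ (2*D)))
    (T : ℝ) (hiT : 2 ≤ i T) (hlast : τ (i T) < T)
    (m α : ℝ)
    (hm : m = T - τ (i T)) (hα : α = τ (i T) - τ ((i T : ℤ) - 1)) :
    m + α ∈ Set.Ioo (0 : ℝ) T ∧
    (I T - I (T - m)) / m - (I T - I (T - (m + α))) / (m + α)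
      = σ^2 * (α * m ^ (2*D) - m * α ^ (2*D)) / (m * (m + α)) ∧
    Tendsto (fun x : ℝ => σ^2 * (α * x ^ (2*D) - x * α ^ (2*D)) / (x * (x + α)))
      (nhdsWithin 0 (Set.Ioi 0)) atTop := by
  have hD0 : D ≠ 0 := hD.1.ne'
  obtain ⟨k, hk⟩ : ∃ k : ℕ, i T = k + 1 := ⟨i T - 1, by omega⟩
  have hτk : 0 < τ k := hτ1.trans_le (hτmono.monotone (by omega))
  have hτkk : τ k < τ (k + 1) := hτmono (lt_add_one _)
  have hlastNode : 0 ≤ τ (i T) := by rw [hk]; push_cast; linarith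
  have hlastIncrement := IsCumulativeVariance.sub_apply_lastNode hD0 hτmono hi hI (by linarith) hlastNode
  have hnodeIncrement := IsCumulativeVariance.apply_node_succ_sub hD0 hτmono hi hI hτk.le
  rw [← hm] at hlastIncrement
  rw [hk] at hm hα hlastIncrement hlast
  push_cast at hm hα hlastIncrement hlast
  rw [add_sub_cancel_right] at hα
  have hTm : T - m = τ (k + 1) := by rw [hm]; ring
  have hTmα : T - (m + α) = τ k := by rw [hm, hα]; ring
  have hpred : I T - I (T - (m + α)) = σ^2 * (m ^ (2*D) + α ^ (2*D)) := by
    rw [hTmα, ← sub_add_sub_cancel _ (I (τ (k + 1))), hlastIncrement, hnodeIncrement, ← hα]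
    ring
  have hm0 : 0 < m := by linarith
  have hα0 : 0 < α := by linarith
  refine ⟨⟨by linarith, by linarith⟩, ?_, tendsto_gap_nhdsGT_zero (by linarith [hD.2]) hα0
    (by positivity)⟩
  rw [hTm, hlastIncrement, hpred]
  field_simp
  ring

/-- Assume `i(T) ≥ 2` and `τ_{i(T)} < T`. Then `m + α ∈ (0, T)` and
`Q_T(m) − Q_T(m+α) = σ²·(α·m^{2D} − m·α^{2D})/(m·(m+α))`. Consequently, for fixed
`α > 0` and `σ > 0`, that expression tends to `+∞` as `m → 0⁺`. -/
theorem QT_gap_at_m_plus_alpha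
    (D σ : ℝ) (hD : D ∈ Set.Ioo (0 : ℝ) (1/2)) (hσ : 0 < σ)
    (τ : ℤ → ℝ) (hτmono : StrictMono τ) (hτ0 : τ 0 < 0) (hτ1 : 0 < τ 1)
    (hτtop : Tendsto τ atTop atTop) (hτbot : Tendsto τ atBot atBot)
    (i : ℝ → ℕ)
    (hi : ∀ t : ℝ, 0 ≤ t → τ (i t) ≤ t ∧ t < τ ((i t : ℤ) + 1))
    (I : ℝ → ℝ)
    (hI : ∀ t : ℝ, 0 ≤ t →
      I t = σ^2 * ((t - τ (i t)) ^ (2*D)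
        + (∑ k ∈ Finset.range (i t), (τ ((k : ℤ) + 1) - τ (k : ℤ)) ^ (2*D))
        - (-τ 0) ^ (2*D)))
    (T : ℝ) (hT : 0 < T) (hiT : 2 ≤ i T) (hlast : τ (i T) < T)
    (m α : ℝ)
    (hm : m = T - τ (i T)) (hα : α = τ (i T) - τ ((i T : ℤ) - 1)) :
    m + α ∈ Set.Ioo (0 : ℝ) T ∧
    (I T - I (T - m)) / m - (I T - I (T - (m + α))) / (m + α)
      = σ^2 * (α * m ^ (2*D) - m * α ^ (2*D)) / (m * (m + α)) ∧
    Tendsto (fun x : ℝ => σ^2 * (α * x ^ (2*D) - x * α ^ (2*D)) / (x * (x + α)))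
      (nhdsWithin 0 (Set.Ioi 0)) atTop :=
  QT_gap_at_m_plus_alpha_general D σ hD hσ τ hτmono hτ1 i hi I hI T hiT hlast m α hm hα
end

section
/- Assume i(T) ≥ 2, τ_{i(T)} < T, and m < K·α. Then Q_T is twice differentiable on the open interval (m, m+α); at every t ∈ (m, m+α) with Q_T′(t) = 0 one has Q_T″(t) > 0; and there exists exactly one γ ∈ (m, m+α) with Q_T′(γ) = 0. This γ is the unique minimizer of Q_T on (m, m+α). -/
/-!
On `(m, m + α)` the point `T - u` lies in `[τ_{i(T)-1}, τ_{i(T)})`, so with `p = 2D`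
`Q_T(u) = σ² (m^p + α^p - (m + α - u)^p) / u` there. Hence `Q_T' = σ² N / u²` with
`N(u) = p u (m + α - u)^(p-1) + (m + α - u)^p - m^p - α^p`, and `N' = p (1 - p) u (m + α - u)^(p-2) > 0`.
The condition `m < K α` says exactly that `N(m) < 0`, while `N → +∞` at `m + α`; so `N` has a
single zero `γ`, where `Q_T'` changes sign from negative to positive.
-/

open Filter Set Topology

lemma hasDerivAt_const_sub_rpow {b q u : ℝ} (hu : u < b) :
    HasDerivAt (fun x => (b - x) ^ q) (-(q * (b - u) ^ (q - 1))) u :=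
  (((hasDerivAt_id' u).const_sub b).rpow_const
    (Or.inl (sub_pos.2 hu).ne')).congr_deriv (by ring)

lemma tendsto_const_sub_nhdsLT (b : ℝ) : Tendsto (fun u => b - u) (𝓝[<] b) (𝓝[>] 0) := by
  refine tendsto_nhdsWithin_iff.2 ⟨?_, ?_⟩
  · have : Tendsto (fun u => b - u) (𝓝 b) (𝓝 (b - b)) := tendsto_const_nhds.sub tendsto_id
    exact (sub_self b ▸ this).mono_left nhdsWithin_le_nhds
  · filter_upwards [self_mem_nhdsWithin] with u hu using sub_pos.2 (show u < b from hu)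

lemma lt_of_hasDerivAt_of_neg_of_pos {f f' : ℝ → ℝ} {a b γ t : ℝ}
    (hf : ∀ u ∈ Ioo a b, HasDerivAt f (f' u) u)
    (hneg : ∀ u ∈ Ioo a γ, f' u < 0) (hpos : ∀ u ∈ Ioo γ b, 0 < f' u)
    (hγ : γ ∈ Ioo a b) (ht : t ∈ Ioo a b) (htγ : t ≠ γ) : f γ < f t := by
  have hcont : ContinuousOn f (Ioo a b) := fun u hu =>
    (hf u hu).continuousAt.continuousWithinAt
  rcases htγ.lt_or_gt with h | h
  · have hanti : StrictAntiOn f (Ioc a γ) := by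
      refine strictAntiOn_of_hasDerivWithinAt_neg (convex_Ioc a γ)
        (hcont.mono (Ioc_subset_Ioo_right hγ.2)) (fun u hu => ?_) (by simpa using hneg)
      rw [interior_Ioc] at hu ⊢
      exact (hf u ⟨hu.1, hu.2.trans hγ.2⟩).hasDerivWithinAt
    exact hanti ⟨ht.1, h.le⟩ ⟨hγ.1, le_rfl⟩ h
  · have hmono : StrictMonoOn f (Ico γ b) := by
      refine strictMonoOn_of_hasDerivWithinAt_pos (convex_Ico γ b)
        (hcont.mono (Ico_subset_Ioo_left hγ.1)) (fun u hu => ?_) (by simpa using hpos)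
      rw [interior_Ico] at hu ⊢
      exact (hf u ⟨hγ.1.trans hu.1, hu.2⟩).hasDerivWithinAt
    exact hmono ⟨le_rfl, hγ.2⟩ ⟨h.le, ht.2⟩ h

noncomputable def derivNumer (p b c u : ℝ) : ℝ := p * u * (b - u) ^ (p - 1) + (b - u) ^ p - c

section derivNumer

variable {p b c : ℝ}

lemma hasDerivAt_div_derivNumer {u : ℝ} (hu : 0 < u) (hub : u < b) :
    HasDerivAt (fun x => (c - (b - x) ^ p) / x) (derivNumer p b c u / u ^ 2) u :=
  (((hasDerivAt_const_sub_rpow hub).const_sub c).div (hasDerivAt_id' u) hu.ne').congr_deriv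
    (by rw [derivNumer]; ring)

lemma hasDerivAt_derivNumer {u : ℝ} (hub : u < b) :
    HasDerivAt (derivNumer p b c) (p * (1 - p) * u * (b - u) ^ (p - 2)) u := by
  have h := ((((hasDerivAt_id' u).const_mul p).mul (hasDerivAt_const_sub_rpow (q := p - 1) hub)).add
    (hasDerivAt_const_sub_rpow (q := p) hub)).sub_const c
  exact h.congr_deriv (by rw [show p - 1 - 1 = p - 2 by ring]; ring)

lemma strictMonoOn_derivNumer (hp0 : 0 < p) (hp1 : p < 1) :
    StrictMonoOn (derivNumer p b c) (Ioo 0 b) := by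
  refine strictMonoOn_of_hasDerivWithinAt_pos (f' := fun u => p * (1 - p) * u * (b - u) ^ (p - 2))
    (convex_Ioo 0 b)
    (fun u hu => (hasDerivAt_derivNumer hu.2).continuousAt.continuousWithinAt)
    (fun u hu => ?_) (fun u hu => ?_) <;> rw [interior_Ioo] at hu
  · exact (hasDerivAt_derivNumer hu.2).hasDerivWithinAt
  · have := Real.rpow_pos_of_pos (sub_pos.2 hu.2) (p - 2)
    have := hu.1
    have : 0 < 1 - p := by linarith
    positivity

lemma tendsto_derivNumer_nhdsLT (hp0 : 0 < p) (hp1 : p < 1) (hb : 0 < b) :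
    Tendsto (derivNumer p b c) (𝓝[<] b) atTop := by
  have hlin : Tendsto (fun u => p * u) (𝓝[<] b) (𝓝 (p * b)) :=
    ((continuous_const.mul continuous_id).tendsto b).mono_left nhdsWithin_le_nhds
  have hsing : Tendsto (fun u => (b - u) ^ (p - 1)) (𝓝[<] b) atTop :=
    (tendsto_rpow_neg_nhdsGT_zero (by linarith)).comp (tendsto_const_sub_nhdsLT b)
  have hvan : Tendsto (fun u => (b - u) ^ p - c) (𝓝[<] b) (𝓝 ((0 : ℝ) ^ p - c)) :=
    ((Real.continuousAt_rpow_const 0 p (Or.inr hp0.le)).tendsto.comp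
      ((tendsto_const_sub_nhdsLT b).mono_right nhdsWithin_le_nhds)).sub_const c
  exact ((hlin.pos_mul_atTop (by positivity) hsing).atTop_add hvan).congr fun u => by
    simp only [derivNumer]; ring

lemma exists_derivNumer_eq_zero (hp0 : 0 < p) (hp1 : p < 1) {a : ℝ} (ha : 0 ≤ a) (hab : a < b)
    (hneg : derivNumer p b c a < 0) : ∃ γ ∈ Ioo a b, derivNumer p b c γ = 0 := by
  obtain ⟨u, hpos, hu⟩ := ((tendsto_derivNumer_nhdsLT hp0 hp1 (ha.trans_lt hab)).eventually
    (eventually_gt_atTop 0)).and (Ioo_mem_nhdsLT hab) |>.exists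
  have hcont : ContinuousOn (derivNumer p b c) (Icc a u) := fun x hx =>
    (hasDerivAt_derivNumer (hx.2.trans_lt hu.2)).continuousAt.continuousWithinAt
  obtain ⟨γ, hγ, hγ0⟩ := intermediate_value_Ioo hu.1.le hcont ⟨hneg, hpos⟩
  exact ⟨γ, ⟨hγ.1, hγ.2.trans hu.2⟩, hγ0⟩

theorem unique_min_of_eqOn_rpow_slope {Q : ℝ → ℝ} {κ a : ℝ} (hκ : 0 < κ)
    (hp0 : 0 < p) (hp1 : p < 1) (ha : 0 ≤ a) (hab : a < b) (hneg : derivNumer p b c a < 0)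
    (hQ : EqOn Q (fun u => κ * ((c - (b - u) ^ p) / u)) (Ioo a b)) :
    (∀ t ∈ Ioo a b, DifferentiableAt ℝ Q t ∧ DifferentiableAt ℝ (deriv Q) t ∧
      (deriv Q t = 0 → 0 < deriv (deriv Q) t)) ∧
    (∃! γ, γ ∈ Ioo a b ∧ deriv Q γ = 0) ∧
    (∀ γ ∈ Ioo a b, deriv Q γ = 0 → ∀ t ∈ Ioo a b, t ≠ γ → Q γ < Q t) := by
  set N := derivNumer p b c
  have hpos : ∀ t ∈ Ioo a b, 0 < t := fun t ht => ha.trans_lt ht.1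
  have hQ' : ∀ t ∈ Ioo a b, HasDerivAt Q (κ * (N t / t ^ 2)) t := fun t ht =>
    ((hasDerivAt_div_derivNumer (hpos t ht) ht.2).const_mul κ).congr_of_eventuallyEq
      (eventually_of_mem (isOpen_Ioo.mem_nhds ht) hQ)
  have hQ'' : ∀ t ∈ Ioo a b, HasDerivAt (deriv Q)
      (κ * ((p * (1 - p) * t * (b - t) ^ (p - 2) * t ^ 2 - N t * (2 * t)) / (t ^ 2) ^ 2)) t :=
    fun t ht => ((((hasDerivAt_derivNumer ht.2).div ((hasDerivAt_pow 2 t).congr_deriv (by ring))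
      (pow_pos (hpos t ht) 2).ne')).const_mul κ).congr_of_eventuallyEq
      (eventually_of_mem (isOpen_Ioo.mem_nhds ht) fun u hu => (hQ' u hu).deriv)
  have hcrit : ∀ t ∈ Ioo a b, deriv Q t = 0 ↔ N t = 0 := fun t ht => by
    rw [(hQ' t ht).deriv]
    have := hpos t ht
    simp [hκ.ne', this.ne']
  have hmono : StrictMonoOn N (Ioo a b) :=
    (strictMonoOn_derivNumer hp0 hp1).mono (Ioo_subset_Ioo_left ha)
  refine ⟨fun t ht => ⟨(hQ' t ht).differentiableAt, (hQ'' t ht).differentiableAt, fun h => ?_⟩,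
    ?_, fun γ hγ hγ0 t ht htγ => ?_⟩
  · rw [(hQ'' t ht).deriv, (hcrit t ht).1 h]
    have := hpos t ht
    have := Real.rpow_pos_of_pos (sub_pos.2 ht.2) (p - 2)
    have : 0 < 1 - p := by linarith
    rw [zero_mul, sub_zero]
    positivity
  · obtain ⟨γ, hγ, hγ0⟩ : ∃ γ ∈ Ioo a b, N γ = 0 := exists_derivNumer_eq_zero hp0 hp1 ha hab hneg
    refine ⟨γ, ⟨hγ, (hcrit γ hγ).2 hγ0⟩, fun γ' ⟨hγ', h⟩ => hmono.injOn hγ' hγ ?_⟩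
    rw [(hcrit γ' hγ').1 h, hγ0]
  · rw [hcrit γ hγ] at hγ0
    refine lt_of_hasDerivAt_of_neg_of_pos hQ' (fun u hu => ?_) (fun u hu => ?_) hγ ht htγ
    · have : N u < 0 := hγ0 ▸ hmono ⟨hu.1, hu.2.trans hγ.2⟩ hγ hu.2
      have := hpos u ⟨hu.1, hu.2.trans hγ.2⟩
      exact mul_neg_of_pos_of_neg hκ (div_neg_of_neg_of_pos ‹_› (by positivity))
    · have : 0 < N u := hγ0 ▸ hmono hγ ⟨hγ.1.trans hu.1, hu.2⟩ hu.1
      have := hpos u ⟨hγ.1.trans hu.1, hu.2⟩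
      positivity

end derivNumer

lemma derivNumer_neg_of_lt {p m α : ℝ} (hp0 : 0 < p) (hp1 : p < 1) (hm : 0 < m) (hα : 0 < α)
    (hmα : m < (1 / p) ^ (1 / (1 - p)) * α) : derivNumer p (m + α) (m ^ p + α ^ p) m < 0 := by
  have hratio : (m / α) ^ (1 - p) < 1 / p := by
    have h := Real.rpow_lt_rpow (div_pos hm hα).le ((div_lt_iff₀ hα).2 hmα) (sub_pos.2 hp1)
    rwa [one_div (1 - p), Real.rpow_inv_rpow (by positivity) (sub_pos.2 hp1).ne'] at h
  have hsplit : m * α ^ (p - 1) = m ^ p * (m / α) ^ (1 - p) := by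
    rw [Real.div_rpow hm.le hα.le, Real.rpow_sub hm, Real.rpow_sub hα, Real.rpow_sub hα,
      Real.rpow_one, Real.rpow_one]
    field_simp
  have hmp : 0 < m ^ p := Real.rpow_pos_of_pos hm p
  rw [derivNumer, add_sub_cancel_left, mul_assoc, hsplit]
  rw [lt_div_iff₀ hp0] at hratio
  nlinarith

lemma StrictMono.eq_of_mem_Ico_add_one {α : Type*} [Preorder α] {τ : ℤ → α} (hτ : StrictMono τ)
    {j k : ℤ} {t : α} (hj : t ∈ Ico (τ j) (τ (j + 1))) (hk : t ∈ Ico (τ k) (τ (k + 1))) :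
    j = k := by
  have h1 := hτ.lt_iff_lt.1 (hj.1.trans_lt hk.2)
  have h2 := hτ.lt_iff_lt.1 (hk.1.trans_lt hj.2)
  omega

lemma sub_eq_of_index_add_one {τ : ℤ → ℝ} {i : ℝ → ℕ} {I : ℝ → ℝ} {σ p s t : ℝ} {k : ℕ}
    (hI : ∀ t : ℝ, 0 ≤ t → I t = σ ^ 2 * ((t - τ (i t)) ^ p
      + (∑ k ∈ Finset.range (i t), (τ ((k : ℤ) + 1) - τ (k : ℤ)) ^ p) - (-τ 0) ^ p))
    (hs : 0 ≤ s) (ht : 0 ≤ t) (his : i s = k) (hit : i t = k + 1) :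
    I t - I s = σ ^ 2 * ((t - τ (k + 1)) ^ p + (τ (k + 1) - τ k) ^ p - (s - τ k) ^ p) := by
  rw [hI t ht, hI s hs, his, hit, Finset.sum_range_succ]
  push_cast
  ring

theorem QT_unique_minimum_between_jumps_general
    (D σ : ℝ) (hD : D ∈ Set.Ioo (0 : ℝ) (1/2)) (hσ : 0 < σ)
    (τ : ℤ → ℝ) (hτmono : StrictMono τ) (hτ1 : 0 < τ 1)
    (i : ℝ → ℕ)
    (hi : ∀ t : ℝ, 0 ≤ t → τ (i t) ≤ t ∧ t < τ ((i t : ℤ) + 1))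
    (I : ℝ → ℝ)
    (hI : ∀ t : ℝ, 0 ≤ t →
      I t = σ^2 * ((t - τ (i t)) ^ (2*D)
        + (∑ k ∈ Finset.range (i t), (τ ((k : ℤ) + 1) - τ (k : ℤ)) ^ (2*D))
        - (-τ 0) ^ (2*D)))
    (T : ℝ) (hiT : 2 ≤ i T) (hlast : τ (i T) < T)
    (m α K : ℝ)
    (hm : m = T - τ (i T)) (hα : α = τ (i T) - τ ((i T : ℤ) - 1))
    (hK : K = (1 / (2*D)) ^ (1 / (1 - 2*D)))
    (hmK : m < K * α) :
    (∀ t ∈ Set.Ioo m (m + α),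
        DifferentiableAt ℝ (fun u : ℝ => (I T - I (T - u)) / u) t ∧
        DifferentiableAt ℝ (deriv (fun u : ℝ => (I T - I (T - u)) / u)) t ∧
        (deriv (fun u : ℝ => (I T - I (T - u)) / u) t = 0 →
          0 < deriv (deriv (fun u : ℝ => (I T - I (T - u)) / u)) t)) ∧
    (∃! γ : ℝ, γ ∈ Set.Ioo m (m + α) ∧
        deriv (fun u : ℝ => (I T - I (T - u)) / u) γ = 0) ∧
    (∀ γ ∈ Set.Ioo m (m + α),
        deriv (fun u : ℝ => (I T - I (T - u)) / u) γ = 0 →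
        ∀ t ∈ Set.Ioo m (m + α), t ≠ γ →
          (I T - I (T - γ)) / γ < (I T - I (T - t)) / t) := by
  obtain ⟨hD0, hD1⟩ := hD
  obtain ⟨k, hk⟩ : ∃ k : ℕ, i T = k + 1 := ⟨i T - 1, by omega⟩
  rw [hk] at hm hα hlast
  push_cast at hm hα hlast
  rw [add_sub_cancel_right] at hα
  have hτk : 0 < τ k := hτ1.trans_le (hτmono.monotone (by omega))
  have hm0 : 0 < m := by linarith
  have hα0 : 0 < α := by linarith [hτmono (lt_add_one (k : ℤ))]
  have hQ : EqOn (fun u => (I T - I (T - u)) / u)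
      (fun u => σ ^ 2 * ((m ^ (2 * D) + α ^ (2 * D) - (m + α - u) ^ (2 * D)) / u))
      (Ioo m (m + α)) := fun u hu => by
    have hTu : T - u ∈ Ico (τ k) (τ (k + 1)) := ⟨by linarith [hu.2], by linarith [hu.1]⟩
    have hiu : i (T - u) = k := by
      exact_mod_cast hτmono.eq_of_mem_Ico_add_one (hi (T - u) (by linarith [hTu.1])) hTu
    beta_reduce
    rw [sub_eq_of_index_add_one hI (by linarith [hTu.1]) (by linarith) hiu hk, ← hm, ← hα,
      show T - u - τ k = m + α - u by rw [hm, hα]; ring]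
    ring
  subst hK
  exact unique_min_of_eqOn_rpow_slope (pow_pos hσ 2) (by linarith) (by linarith) hm0.le
    (by linarith) (derivNumer_neg_of_lt (by linarith) (by linarith) hm0 hα0 hmK) hQ

/-- Assume `i(T) ≥ 2`, `τ_{i(T)} < T` and `m < K·α`. Then `Q_T` is twice
differentiable on `(m, m+α)`; at every `t ∈ (m, m+α)` with `Q_T′(t) = 0` one has
`Q_T″(t) > 0`; there is exactly one `γ ∈ (m, m+α)` with `Q_T′(γ) = 0`; and this `γ` is
the unique minimizer of `Q_T` on `(m, m+α)`. -/
theorem QT_unique_minimum_between_jumps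
    (D σ : ℝ) (hD : D ∈ Set.Ioo (0 : ℝ) (1/2)) (hσ : 0 < σ)
    (τ : ℤ → ℝ) (hτmono : StrictMono τ) (hτ0 : τ 0 < 0) (hτ1 : 0 < τ 1)
    (hτtop : Tendsto τ atTop atTop) (hτbot : Tendsto τ atBot atBot)
    (i : ℝ → ℕ)
    (hi : ∀ t : ℝ, 0 ≤ t → τ (i t) ≤ t ∧ t < τ ((i t : ℤ) + 1))
    (I : ℝ → ℝ)
    (hI : ∀ t : ℝ, 0 ≤ t →
      I t = σ^2 * ((t - τ (i t)) ^ (2*D)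
        + (∑ k ∈ Finset.range (i t), (τ ((k : ℤ) + 1) - τ (k : ℤ)) ^ (2*D))
        - (-τ 0) ^ (2*D)))
    (T : ℝ) (hT : 0 < T) (hiT : 2 ≤ i T) (hlast : τ (i T) < T)
    (m α K : ℝ)
    (hm : m = T - τ (i T)) (hα : α = τ (i T) - τ ((i T : ℤ) - 1))
    (hK : K = (1 / (2*D)) ^ (1 / (1 - 2*D)))
    (hmK : m < K * α) :
    (∀ t ∈ Set.Ioo m (m + α),
        DifferentiableAt ℝ (fun u : ℝ => (I T - I (T - u)) / u) t ∧
        DifferentiableAt ℝ (deriv (fun u : ℝ => (I T - I (T - u)) / u)) t ∧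
        (deriv (fun u : ℝ => (I T - I (T - u)) / u) t = 0 →
          0 < deriv (deriv (fun u : ℝ => (I T - I (T - u)) / u)) t)) ∧
    (∃! γ : ℝ, γ ∈ Set.Ioo m (m + α) ∧
        deriv (fun u : ℝ => (I T - I (T - u)) / u) γ = 0) ∧
    (∀ γ ∈ Set.Ioo m (m + α),
        deriv (fun u : ℝ => (I T - I (T - u)) / u) γ = 0 →
        ∀ t ∈ Set.Ioo m (m + α), t ≠ γ →
          (I T - I (T - γ)) / γ < (I T - I (T - t)) / t) :=
  QT_unique_minimum_between_jumps_general D σ hD hσ τ hτmono hτ1 i hi I hI T hiT hlast m α K hm hα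
    hK hmK
end

section
/- Let k ≥ 1 be an integer, t > 0, and let τ₀ < 0 < τ₁ < τ₂ < ⋯ < τ_k ≤ t be real numbers. Then σ²·[(t − τ_k)^{2D} + Σ_{j=1}^{k} (τ_j − τ_{j−1})^{2D} − (−τ₀)^{2D}] ≤ σ²·[2D·(−τ₀)^{2D−1}·t + k·(t/k)^{2D}]. -/
/-!
Write `p = 2D ∈ (0, 1)`, so that `x ↦ x ^ p` is concave on `[0, ∞)`. By concavity
`(τ₁ - τ₀) ^ p` lies below the tangent line of `x ^ p` at `-τ₀`, so it exceeds `(-τ₀) ^ p` by at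
most `p (-τ₀)^(p-1) τ₁ ≤ p (-τ₀)^(p-1) t`. The remaining `k` gaps, the last one being `t - τ_k`,
are nonnegative with total `t - τ₁ ≤ t`, so by Jensen's inequality the sum of their `p`-th powers is at most `k (t / k) ^ p`.
-/

open Finset

theorem Nat.apply_zero_le_of_forall_lt_le_succ {α : Type*} [Preorder α] {f : ℕ → α} :
    ∀ {n : ℕ}, (∀ i < n, f i ≤ f (i + 1)) → f 0 ≤ f n
  | 0, _ => le_rfl
  | n + 1, hf =>
    (apply_zero_le_of_forall_lt_le_succ fun i hi => hf i (by omega)).trans (hf n n.lt_succ_self)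

namespace Real

variable {p : ℝ}

theorem rpow_add_le_rpow_add_mul (hp₀ : 0 ≤ p) (hp₁ : p ≤ 1) {a h : ℝ} (ha : 0 < a)
    (hh : -a ≤ h) : (a + h) ^ p ≤ a ^ p + p * a ^ (p - 1) * h := by
  have hs : -1 ≤ h / a := by rw [le_div_iff₀ ha]; linarith
  calc (a + h) ^ p = a ^ p * (1 + h / a) ^ p := by
        rw [← mul_rpow ha.le (by linarith), mul_add, mul_one, mul_div_cancel₀ _ ha.ne']
    _ ≤ a ^ p * (1 + p * (h / a)) := by
        gcongr; exact rpow_one_add_le_one_add_mul_self hs hp₀ hp₁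
    _ = a ^ p + p * a ^ (p - 1) * h := by
        rw [rpow_sub_one ha.ne']; field_simp

theorem sum_rpow_le_card_mul_rpow_mean {ι : Type*} (hp₀ : 0 ≤ p) (hp₁ : p ≤ 1) (s : Finset ι)
    {x : ι → ℝ} (hx : ∀ i ∈ s, 0 ≤ x i) :
    ∑ i ∈ s, x i ^ p ≤ #s * ((∑ i ∈ s, x i) / #s) ^ p := by
  rcases s.eq_empty_or_nonempty with rfl | hs
  · simp
  have hn : (0 : ℝ) < #s := by exact_mod_cast hs.card_pos
  have jensen := (concaveOn_rpow hp₀ hp₁).le_map_sum (t := s) (w := fun _ => (#s : ℝ)⁻¹)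
    (fun _ _ => by positivity) (by simp [hn.ne']) hx
  simp only [smul_eq_mul, inv_mul_eq_div, ← sum_div] at jensen
  calc ∑ i ∈ s, x i ^ p = #s * ((∑ i ∈ s, x i ^ p) / #s) := by field_simp
    _ ≤ #s * ((∑ i ∈ s, x i) / #s) ^ p := by gcongr

theorem sum_range_sub_rpow_le (hp₀ : 0 ≤ p) (hp₁ : p ≤ 1) {x : ℕ → ℝ} {n : ℕ}
    (hx : ∀ i < n, x i ≤ x (i + 1)) :
    ∑ i ∈ range n, (x (i + 1) - x i) ^ p ≤ n * ((x n - x 0) / n) ^ p := by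
  have jensen := sum_rpow_le_card_mul_rpow_mean hp₀ hp₁ (range n)
    (x := fun i => x (i + 1) - x i) fun i hi => sub_nonneg.2 (hx i (mem_range.1 hi))
  rwa [card_range, sum_range_sub] at jensen

theorem sum_range_sub_rpow_add_rpow_le (hp₀ : 0 ≤ p) (hp₁ : p ≤ 1) {x : ℕ → ℝ} {n : ℕ}
    {b : ℝ} (hx : ∀ i < n, x i ≤ x (i + 1)) (hb : x n ≤ b) :
    ∑ i ∈ range n, (x (i + 1) - x i) ^ p + (b - x n) ^ p
      ≤ (n + 1) * ((b - x 0) / (n + 1)) ^ p := by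
  set y := Function.update x (n + 1) b
  have hy : ∀ i ≤ n, y i = x i := fun i hi => Function.update_of_ne (by omega) _ _
  have hyb : y (n + 1) = b := Function.update_self _ _ _
  have key := sum_range_sub_rpow_le hp₀ hp₁ (x := y) (n := n + 1) fun i hi => by
    rcases Nat.lt_succ_iff_lt_or_eq.1 hi with hi | rfl
    · rw [hy i hi.le, hy (i + 1) hi]; exact hx i hi
    · rw [hy i le_rfl, hyb]; exact hb
  rw [sum_range_succ, hyb, hy n le_rfl, hy 0 n.zero_le] at key
  push_cast at key
  convert key using 2
  exact sum_congr rfl fun i hi => by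
    rw [hy i (mem_range.1 hi).le, hy (i + 1) (mem_range.1 hi)]

end Real

theorem timeChange_pathwise_bound_general
    (D σ : ℝ) (hD : D ∈ Set.Ioo (0 : ℝ) (1/2))
    (k : ℕ) (hk : 1 ≤ k) (t : ℝ)
    (τ : ℕ → ℝ) (hτ0 : τ 0 < 0) (hτ1 : 0 < τ 1)
    (hτmono : ∀ j, j < k → τ j < τ (j + 1)) (hτk : τ k ≤ t) :
    σ^2 * ((t - τ k) ^ (2*D)
        + (∑ j ∈ Finset.range k, (τ (j + 1) - τ j) ^ (2*D))
        - (-τ 0) ^ (2*D))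
      ≤ σ^2 * (2*D * (-τ 0) ^ (2*D - 1) * t + k * (t / k) ^ (2*D)) := by
  obtain ⟨m, rfl⟩ : ∃ m, k = m + 1 := ⟨k - 1, by omega⟩
  obtain ⟨hp₀, hp₁⟩ : 0 ≤ 2 * D ∧ 2 * D ≤ 1 := by constructor <;> linarith [hD.1, hD.2]
  have hgaps : ∀ i < m, τ (i + 1) ≤ τ (i + 1 + 1) := fun i hi => (hτmono (i + 1) (by omega)).le
  have hτ1t : τ 1 ≤ t := (Nat.apply_zero_le_of_forall_lt_le_succ hgaps).trans hτk
  have hfirst : (τ 1 - τ 0) ^ (2 * D) ≤ (-τ 0) ^ (2 * D) + 2 * D * (-τ 0) ^ (2 * D - 1) * t := by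
    have h := Real.rpow_add_le_rpow_add_mul hp₀ hp₁ (neg_pos.2 hτ0) (h := τ 1) (by linarith)
    have hslope : 0 ≤ 2 * D * (-τ 0) ^ (2 * D - 1) :=
      mul_nonneg hp₀ (Real.rpow_nonneg (by linarith) _)
    rw [neg_add_eq_sub] at h
    linarith [mul_le_mul_of_nonneg_left hτ1t hslope]
  have hrest := Real.sum_range_sub_rpow_add_rpow_le hp₀ hp₁ (x := fun i => τ (i + 1)) hgaps hτk
  have hmean : ((m : ℝ) + 1) * ((t - τ 1) / (m + 1)) ^ (2 * D)
      ≤ (m + 1) * (t / (m + 1)) ^ (2 * D) := by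
    gcongr
    linarith
  rw [sum_range_succ']
  push_cast at hrest ⊢
  gcongr
  linarith

/-- For `k ≥ 1`, `t > 0` and `τ₀ < 0 < τ₁ < ⋯ < τ_k ≤ t`:
`σ²[(t − τ_k)^{2D} + Σ_{j=1}^k (τ_j − τ_{j−1})^{2D} − (−τ₀)^{2D}]
  ≤ σ²[2D(−τ₀)^{2D−1}t + k(t/k)^{2D}]`. -/
theorem timeChange_pathwise_bound
    (D σ : ℝ) (hD : D ∈ Set.Ioo (0 : ℝ) (1/2)) (hσ : 0 < σ)
    (k : ℕ) (hk : 1 ≤ k) (t : ℝ) (ht : 0 < t)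
    (τ : ℕ → ℝ) (hτ0 : τ 0 < 0) (hτ1 : 0 < τ 1)
    (hτmono : ∀ j, j < k → τ j < τ (j + 1)) (hτk : τ k ≤ t) :
    σ^2 * ((t - τ k) ^ (2*D)
        + (∑ j ∈ Finset.range k, (τ (j + 1) - τ j) ^ (2*D))
        - (-τ 0) ^ (2*D))
      ≤ σ^2 * (2*D * (-τ 0) ^ (2*D - 1) * t + k * (t / k) ^ (2*D)) :=
  timeChange_pathwise_bound_general D σ hD k hk t τ hτ0 hτ1 hτmono hτk
end

section
/- For every δ with 0 < δ < 1/(1 − 2D) there exists a constant C < ∞ such that E[I(t)^δ] ≤ C·t^δ for all t ∈ (0, 1]. In particular, the family of random variables {I(t)/t : t ∈ (0, 1]} is bounded in L^δ. -/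
/-!
Pathwise, `I(t)/σ²` is the `2D`-power sum of the gaps of the partition
`τ₀ < τ₁ < ⋯ < τ_{i(t)} ≤ t` minus `(-τ₀)^{2D}`. Subadditivity of `x ↦ x^{2D}` makes it
nonnegative; since every gap after the first is at most `t`, it is at most
`(t - τ₀)^{2D} - (-τ₀)^{2D} + i(t) t^{2D} ≤ 2D t (-τ₀)^{2D-1} + i(t) t^{2D}` by concavity.
Raised to the power `δ`, the first term has expectation `O(t^δ)` because
`E[(-τ₀)^{-(1-2D)δ}] < ∞` exactly when `(1-2D)δ < 1` (the law of `-τ₀` has bounded density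
near `0`), and the second is `t^{2Dδ} E[i(t)^δ] = O(t^{2Dδ+1}) = O(t^δ)`, since a Poisson
variable of mean `λt ≤ λ` is nonzero with probability `O(t)`.
-/

open MeasureTheory Filter Set

lemma rpow_add_le_rpow_add_mul_rpow_sub_one {x y p : ℝ} (hx : 0 < x) (hy : 0 ≤ y)
    (hp0 : 0 ≤ p) (hp1 : p ≤ 1) : (x + y) ^ p ≤ x ^ p + p * y * x ^ (p - 1) := by
  have hbern : (1 + y / x) ^ p ≤ 1 + p * (y / x) :=
    rpow_one_add_le_one_add_mul_self (by linarith [div_nonneg hy hx.le]) hp0 hp1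
  calc (x + y) ^ p = x ^ p * (1 + y / x) ^ p := by
        rw [← Real.mul_rpow hx.le (by positivity), mul_add, mul_div_cancel₀ _ hx.ne', mul_one]
    _ ≤ x ^ p * (1 + p * (y / x)) := by gcongr
    _ = x ^ p + p * y * x ^ (p - 1) := by rw [Real.rpow_sub_one hx.ne']; field_simp

lemma add_rpow_le_two_mul_rpow_add_two_mul_rpow {a b p : ℝ} (ha : 0 ≤ a) (hb : 0 ≤ b)
    (hp : 0 ≤ p) : (a + b) ^ p ≤ (2 * a) ^ p + (2 * b) ^ p := by
  rcases le_total a b with hab | hba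
  · calc (a + b) ^ p ≤ (2 * b) ^ p := by gcongr; linarith
      _ ≤ (2 * a) ^ p + (2 * b) ^ p := le_add_of_nonneg_left (by positivity)
  · calc (a + b) ^ p ≤ (2 * a) ^ p := by gcongr; linarith
      _ ≤ (2 * a) ^ p + (2 * b) ^ p := le_add_of_nonneg_right (by positivity)

noncomputable def partitionPowerSum (g : ℕ → ℝ) (p t : ℝ) (n : ℕ) : ℝ :=
  (t - g n) ^ p + ∑ k ∈ Finset.range n, (g (k + 1) - g k) ^ p

section partitionPowerSum

variable {g : ℕ → ℝ} {p t : ℝ}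

lemma rpow_sub_le_partitionPowerSum (hg : Monotone g) (hp0 : 0 ≤ p) (hp1 : p ≤ 1) :
    ∀ n, g n ≤ t → (t - g 0) ^ p ≤ partitionPowerSum g p t n
  | 0, _ => by simp [partitionPowerSum]
  | n + 1, hn => by
    have hstep := hg n.le_succ
    calc (t - g 0) ^ p ≤ partitionPowerSum g p t n :=
          rpow_sub_le_partitionPowerSum hg hp0 hp1 n (hstep.trans hn)
      _ = ((t - g (n + 1)) + (g (n + 1) - g n)) ^ p +
            ∑ k ∈ Finset.range n, (g (k + 1) - g k) ^ p := by
          rw [partitionPowerSum]; ring_nf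
      _ ≤ partitionPowerSum g p t (n + 1) := by
          rw [partitionPowerSum, Finset.sum_range_succ]
          linarith [Real.rpow_add_le_add_rpow (sub_nonneg.2 hn) (sub_nonneg.2 hstep) hp0 hp1]

lemma partitionPowerSum_le (hg : Monotone g) (hg1 : 0 ≤ g 1) (hp : 0 ≤ p) :
    ∀ n, g n ≤ t → partitionPowerSum g p t n ≤ (t - g 0) ^ p + n * t ^ p
  | 0, _ => by simp [partitionPowerSum]
  | n + 1, hn => by
    have hstep := hg n.le_succ
    have hpos : 0 ≤ g (n + 1) := hg1.trans (hg (Nat.le_add_left 1 n))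
    have hlast : (t - g (n + 1)) ^ p ≤ t ^ p := by gcongr; linarith
    have hgap : (g (n + 1) - g n) ^ p ≤ (t - g n) ^ p := by gcongr
    have ih := partitionPowerSum_le hg hg1 hp n (hstep.trans hn)
    rw [partitionPowerSum] at ih ⊢
    rw [Finset.sum_range_succ]
    push_cast
    linarith

lemma partitionPowerSum_sub_rpow_mem_Icc (hg : Monotone g) (hg0 : g 0 < 0) (hg1 : 0 ≤ g 1)
    (ht : 0 ≤ t) (hp0 : 0 ≤ p) (hp1 : p ≤ 1) {n : ℕ} (hn : g n ≤ t) :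
    partitionPowerSum g p t n - (-g 0) ^ p ∈
      Icc 0 (p * t * (-g 0) ^ (p - 1) + n * t ^ p) := by
  have hlow := rpow_sub_le_partitionPowerSum hg hp0 hp1 n hn
  have hup := partitionPowerSum_le hg hg1 hp0 n hn
  have hmono : (-g 0) ^ p ≤ (t - g 0) ^ p := by gcongr <;> linarith
  have htangent := rpow_add_le_rpow_add_mul_rpow_sub_one (neg_pos.2 hg0) ht hp0 hp1
  rw [neg_add_eq_sub] at htangent
  constructor <;> linarith

end partitionPowerSum

section Moments

variable {Ω : Type*} [MeasurableSpace Ω] {μ : Measure Ω}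

lemma lintegral_rpow_neg_lt_top_of_measure_le_mul [IsFiniteMeasure μ] {X : Ω → ℝ}
    (hX : AEMeasurable X μ) {b c : ℝ} (hb0 : 0 < b) (hb1 : b < 1)
    (hcdf : ∀ s, 0 ≤ s → μ {ω | X ω ≤ s} ≤ ENNReal.ofReal (c * s)) :
    ∫⁻ ω, ENNReal.ofReal (X ω ^ (-b)) ∂μ < ⊤ := by
  have hpos : ∀ᵐ ω ∂μ, 0 < X ω := by
    have hzero : μ {ω | X ω ≤ 0} = 0 := by simpa using hcdf 0 le_rfl
    filter_upwards [measure_eq_zero_iff_ae_notMem.1 hzero] with ω hω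
    simpa using hω
  have htail : ∀ s, 0 < s → μ {ω | s < X ω ^ (-b)} ≤ ENNReal.ofReal (c * s ^ (-b)⁻¹) := by
    intro s hs
    calc μ {ω | s < X ω ^ (-b)} ≤ μ {ω | X ω ≤ s ^ (-b)⁻¹} := by
          refine measure_mono_ae ?_
          filter_upwards [hpos] with ω hω hlt
          exact ((Real.lt_rpow_inv_iff_of_neg hω hs (neg_neg_of_pos hb0)).2 hlt).le
      _ ≤ _ := hcdf _ (by positivity)
  have hint : IntegrableOn (fun s : ℝ => c * s ^ (-b)⁻¹) (Ioi 1) := by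
    refine (integrableOn_Ioi_rpow_of_lt ?_ one_pos).const_mul c
    rw [inv_neg, neg_lt_neg_iff]
    exact one_lt_inv_iff₀.2 ⟨hb0, hb1⟩
  rw [lintegral_eq_lintegral_meas_lt μ (hpos.mono fun ω hω => Real.rpow_nonneg hω.le _)
      (hX.pow_const _), ← Ioc_union_Ioi_eq_Ioi zero_le_one,
    lintegral_union measurableSet_Ioi (Ioc_disjoint_Ioi le_rfl)]
  refine ENNReal.add_lt_top.2 ⟨?_, ?_⟩
  · calc ∫⁻ s in Ioc 0 1, μ {ω | s < X ω ^ (-b)} ≤ ∫⁻ _ in Ioc (0 : ℝ) 1, μ univ :=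
          lintegral_mono fun _ => measure_mono (subset_univ _)
      _ < ⊤ := by simp [measure_lt_top]
  · calc ∫⁻ s in Ioi 1, μ {ω | s < X ω ^ (-b)}
          ≤ ∫⁻ s in Ioi 1, ENNReal.ofReal (c * s ^ (-b)⁻¹) :=
          setLIntegral_mono' measurableSet_Ioi fun s hs => htail s (zero_lt_one.trans hs)
      _ < ⊤ := hint.lintegral_lt_top

lemma lintegral_natCast_rpow_le_of_poisson {N : Ω → ℕ} (hN : Measurable N) {r R δ : ℝ}
    (hr : 0 ≤ r) (hrR : r ≤ R) (hδ : 0 < δ)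
    (hlaw : ∀ n : ℕ, μ {ω | N ω = n} = ENNReal.ofReal (Real.exp (-r) * r ^ n / n.factorial)) :
    ∫⁻ ω, ENNReal.ofReal ((N ω : ℝ) ^ δ) ∂μ ≤ ENNReal.ofReal (r * Real.exp (2 ^ δ * R)) := by
  have hR : 0 ≤ R := hr.trans hrR
  have hterm : ∀ k : ℕ,
      ((k + 1 : ℕ) : ℝ) ^ δ * (Real.exp (-r) * r ^ (k + 1) / (k + 1).factorial)
        ≤ r * ((2 ^ δ * R) ^ k / k.factorial) := by
    intro k
    have hgrowth : ((k + 1 : ℕ) : ℝ) ^ δ ≤ (2 ^ δ) ^ k := by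
      rw [Real.rpow_pow_comm zero_le_two]
      gcongr
      exact_mod_cast Nat.lt_two_pow_self
    have hweight :
        Real.exp (-r) * r ^ (k + 1) / (k + 1).factorial ≤ r * R ^ k / k.factorial := by
      gcongr ?_ / ?_
      · calc Real.exp (-r) * r ^ (k + 1) ≤ 1 * (r * R ^ k) := by
              gcongr
              · exact Real.exp_le_one_iff.2 (neg_nonpos.2 hr)
              · rw [pow_succ']; gcongr
          _ = r * R ^ k := one_mul _
      · exact_mod_cast Nat.factorial_le k.le_succ
    calc _ ≤ (2 ^ δ) ^ k * (r * R ^ k / k.factorial) := by gcongr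
      _ = r * ((2 ^ δ * R) ^ k / k.factorial) := by ring
  have hexp : HasSum (fun k : ℕ => r * ((2 ^ δ * R) ^ k / k.factorial))
      (r * Real.exp (2 ^ δ * R)) := by
    rw [Real.exp_eq_exp_ℝ]
    exact (NormedSpace.expSeries_div_hasSum_exp _).mul_left r
  calc ∫⁻ ω, ENNReal.ofReal ((N ω : ℝ) ^ δ) ∂μ
      = ∑' n : ℕ, ENNReal.ofReal ((n : ℝ) ^ δ) * μ {ω | N ω = n} := by
        rw [← lintegral_map (f := fun n : ℕ => ENNReal.ofReal ((n : ℝ) ^ δ))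
          (measurable_of_countable _) hN, lintegral_countable']
        simp_rw [Measure.map_apply hN (measurableSet_singleton _)]
        rfl
    _ = ∑' k : ℕ, ENNReal.ofReal (((k + 1 : ℕ) : ℝ) ^ δ) * μ {ω | N ω = k + 1} := by
        rw [tsum_eq_zero_add' ENNReal.summable]
        simp [Real.zero_rpow hδ.ne']
    _ ≤ ∑' k : ℕ, ENNReal.ofReal (r * ((2 ^ δ * R) ^ k / k.factorial)) := by
        refine ENNReal.tsum_le_tsum fun k => ?_
        rw [hlaw, ← ENNReal.ofReal_mul (by positivity)]
        exact ENNReal.ofReal_le_ofReal (hterm k)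
    _ = ENNReal.ofReal (r * Real.exp (2 ^ δ * R)) := by
        rw [← ENNReal.ofReal_tsum_of_nonneg (fun k => by positivity) hexp.summable, hexp.tsum_eq]

lemma lintegral_ofReal_le_mul_add_mul {f g h : Ω → ℝ} {a b : ℝ} (ha : 0 ≤ a) (hb : 0 ≤ b)
    (hh : AEMeasurable h μ) (hle : ∀ᵐ ω ∂μ, f ω ≤ a * g ω + b * h ω) :
    ∫⁻ ω, ENNReal.ofReal (f ω) ∂μ ≤ ENNReal.ofReal a * ∫⁻ ω, ENNReal.ofReal (g ω) ∂μ
      + ENNReal.ofReal b * ∫⁻ ω, ENNReal.ofReal (h ω) ∂μ := by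
  calc ∫⁻ ω, ENNReal.ofReal (f ω) ∂μ
      ≤ ∫⁻ ω, ENNReal.ofReal a * ENNReal.ofReal (g ω)
          + ENNReal.ofReal b * ENNReal.ofReal (h ω) ∂μ := by
        refine lintegral_mono_ae (hle.mono fun ω hω => ?_)
        rw [← ENNReal.ofReal_mul ha, ← ENNReal.ofReal_mul hb]
        exact (ENNReal.ofReal_le_ofReal hω).trans ENNReal.ofReal_add_le
    _ = _ := by
        rw [lintegral_add_right' _ (hh.ennreal_ofReal.const_mul _),
          lintegral_const_mul' _ _ ENNReal.ofReal_ne_top,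
          lintegral_const_mul' _ _ ENNReal.ofReal_ne_top]

lemma lintegral_rpow_le_of_le_mul_rpow_add_mul {Y X : Ω → ℝ} {N : Ω → ℕ} (hN : Measurable N)
    {a b c K p t δ : ℝ} (ha : 0 ≤ a) (hb : 0 ≤ b) (hK : 0 ≤ K) (hc : 0 ≤ c) (ht0 : 0 < t)
    (ht1 : t ≤ 1) (hδ : 0 ≤ δ) (hpδ : (1 - p) * δ ≤ 1)
    (hbound : ∀ᵐ ω ∂μ, 0 ≤ X ω ∧ 0 ≤ Y ω ∧ Y ω ≤ a * t * X ω ^ (p - 1) + b * t ^ p * N ω)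
    (hX : ∫⁻ ω, ENNReal.ofReal (X ω ^ (-((1 - p) * δ))) ∂μ ≤ ENNReal.ofReal K)
    (hNδ : ∫⁻ ω, ENNReal.ofReal ((N ω : ℝ) ^ δ) ∂μ ≤ ENNReal.ofReal (c * t)) :
    ∫⁻ ω, ENNReal.ofReal (Y ω ^ δ) ∂μ ≤
      ENNReal.ofReal (((2 * a) ^ δ * K + (2 * b) ^ δ * c) * t ^ δ) := by
  have hpath : ∀ᵐ ω ∂μ, Y ω ^ δ ≤
      (2 * a * t) ^ δ * X ω ^ (-((1 - p) * δ)) + (2 * b * t ^ p) ^ δ * (N ω : ℝ) ^ δ := by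
    filter_upwards [hbound] with ω ⟨hX0, hY0, hY⟩
    calc Y ω ^ δ ≤ (a * t * X ω ^ (p - 1) + b * t ^ p * N ω) ^ δ := by gcongr
      _ ≤ (2 * (a * t * X ω ^ (p - 1))) ^ δ + (2 * (b * t ^ p * N ω)) ^ δ :=
        add_rpow_le_two_mul_rpow_add_two_mul_rpow (by positivity) (by positivity) hδ
      _ = _ := by
        rw [show 2 * (a * t * X ω ^ (p - 1)) = 2 * a * t * X ω ^ (p - 1) by ring,
          show 2 * (b * t ^ p * N ω) = 2 * b * t ^ p * N ω by ring,
          Real.mul_rpow (x := 2 * a * t) (by positivity) (by positivity),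
          Real.mul_rpow (x := 2 * b * t ^ p) (by positivity) (by positivity),
          ← Real.rpow_mul hX0, show (p - 1) * δ = -((1 - p) * δ) by ring]
  have htpow : t ^ (p * δ) * t ≤ t ^ δ := by
    rw [← Real.rpow_add_one ht0.ne']
    exact Real.rpow_le_rpow_of_exponent_ge ht0 ht1 (by linarith)
  calc ∫⁻ ω, ENNReal.ofReal (Y ω ^ δ) ∂μ
      ≤ ENNReal.ofReal ((2 * a * t) ^ δ) * ENNReal.ofReal K
        + ENNReal.ofReal ((2 * b * t ^ p) ^ δ) * ENNReal.ofReal (c * t) :=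
      (lintegral_ofReal_le_mul_add_mul (by positivity) (by positivity)
        (by fun_prop) hpath).trans (by gcongr)
    _ = ENNReal.ofReal ((2 * a) ^ δ * K * t ^ δ + (2 * b) ^ δ * c * (t ^ (p * δ) * t)) := by
      rw [← ENNReal.ofReal_mul (by positivity), ← ENNReal.ofReal_mul (by positivity),
        ← ENNReal.ofReal_add (by positivity) (by positivity),
        Real.mul_rpow (x := 2 * a) (by positivity) ht0.le,
        Real.mul_rpow (x := 2 * b) (by positivity) (by positivity), ← Real.rpow_mul ht0.le]
      ring_nf
    _ ≤ _ := by
      gcongr ENNReal.ofReal ?_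
      nlinarith [mul_le_mul_of_nonneg_left htpow (by positivity : 0 ≤ (2 * b) ^ δ * c)]

lemma lintegral_ofReal_div_rpow_le {Y : Ω → ℝ} {C t δ : ℝ} (ht : 0 < t) (hY : 0 ≤ᵐ[μ] Y)
    (hmom : ∫⁻ ω, ENNReal.ofReal (Y ω ^ δ) ∂μ ≤ ENNReal.ofReal (C * t ^ δ)) :
    ∫⁻ ω, ENNReal.ofReal ((Y ω / t) ^ δ) ∂μ ≤ ENNReal.ofReal C := by
  have htδ : 0 < t ^ δ := Real.rpow_pos_of_pos ht δ
  calc ∫⁻ ω, ENNReal.ofReal ((Y ω / t) ^ δ) ∂μ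
      = (∫⁻ ω, ENNReal.ofReal (Y ω ^ δ) ∂μ) * ENNReal.ofReal (t ^ δ)⁻¹ := by
        rw [← lintegral_mul_const' _ _ ENNReal.ofReal_ne_top]
        refine lintegral_congr_ae (hY.mono fun ω hω => ?_)
        dsimp only
        rw [← ENNReal.ofReal_mul' (by positivity), Real.div_rpow hω ht.le, div_eq_mul_inv]
    _ ≤ ENNReal.ofReal (C * t ^ δ) * ENNReal.ofReal (t ^ δ)⁻¹ := by gcongr
    _ = ENNReal.ofReal C := by
        rw [← ENNReal.ofReal_mul' (by positivity), mul_inv_cancel_right₀ htδ.ne']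

end Moments

theorem timeChange_Lp_bounded_general
    {Ω : Type*} [MeasurableSpace Ω] (μ : Measure Ω) [IsProbabilityMeasure μ]
    (D σ lam : ℝ) (hD : D ∈ Set.Ioo (0 : ℝ) (1/2)) (hlam : 0 < lam)
    (τ : ℤ → Ω → ℝ) (i : ℝ → Ω → ℕ) (I : ℝ → Ω → ℝ)
    (hτ : ∀ᵐ ω ∂μ, StrictMono (fun n => τ n ω) ∧ τ 0 ω < 0 ∧ 0 < τ 1 ω)
    (hi : ∀ t : ℝ, 0 < t →
      ∀ᵐ ω ∂μ, τ (i t ω) ω ≤ t ∧ t < τ ((i t ω : ℤ) + 1) ω)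
    (hIdef : ∀ t : ℝ, 0 < t → ∀ ω,
      I t ω = σ^2 * ((t - τ (i t ω) ω) ^ (2*D)
        + (∑ k ∈ Finset.range (i t ω), (τ ((k : ℤ) + 1) ω - τ (k : ℤ) ω) ^ (2*D))
        - (-τ 0 ω) ^ (2*D)))
    (hτ0meas : Measurable (τ 0)) (himeas : ∀ t : ℝ, Measurable (i t))
    (hτ0exp : ∀ s : ℝ, 0 ≤ s →
      μ {ω | -τ 0 ω ≤ s} = ENNReal.ofReal (1 - Real.exp (-lam * s)))
    (hpois : ∀ t ∈ Set.Ioc (0 : ℝ) 1, ∀ k : ℕ,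
      μ {ω | i t ω = k} = ENNReal.ofReal (Real.exp (-lam * t) * (lam * t)^k / k.factorial))
    (δ : ℝ) (hδ0 : 0 < δ) (hδ : δ < 1 / (1 - 2*D)) :
    (∃ C : ℝ, ∀ t ∈ Set.Ioc (0 : ℝ) 1,
        ∫⁻ ω, ENNReal.ofReal ((I t ω) ^ δ) ∂μ ≤ ENNReal.ofReal (C * t ^ δ)) ∧
    (∃ M : ℝ, ∀ t ∈ Set.Ioc (0 : ℝ) 1,
        ∫⁻ ω, ENNReal.ofReal ((I t ω / t) ^ δ) ∂μ ≤ ENNReal.ofReal M) := by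
  obtain ⟨hD0, hD1⟩ := hD
  have hb : (1 - 2 * D) * δ < 1 := by rwa [lt_div_iff₀ (by linarith), mul_comm] at hδ
  have hbound : ∀ t, 0 < t → ∀ᵐ ω ∂μ, 0 ≤ -τ 0 ω ∧ 0 ≤ I t ω ∧
      I t ω ≤ σ ^ 2 * (2 * D) * t * (-τ 0 ω) ^ (2 * D - 1) + σ ^ 2 * t ^ (2 * D) * i t ω := by
    intro t ht
    filter_upwards [hτ, hi t ht] with ω ⟨hmono, h0, h1⟩ ⟨hle, _⟩
    have hI := partitionPowerSum_sub_rpow_mem_Icc (g := fun k : ℕ => τ k ω) (p := 2 * D)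
      (hmono.monotone.comp Nat.mono_cast) h0 h1.le ht.le (by linarith) (by linarith) hle
    simp only [partitionPowerSum, Nat.cast_succ, Nat.cast_zero] at hI
    rw [hIdef t ht ω]
    exact ⟨by linarith, by nlinarith [hI.1], by nlinarith [hI.2]⟩
  have hK := lintegral_rpow_neg_lt_top_of_measure_le_mul (μ := μ) hτ0meas.neg.aemeasurable
    (mul_pos (by linarith) hδ0) hb (c := lam) fun s hs => (hτ0exp s hs).trans_le
      (ENNReal.ofReal_le_ofReal (by linarith [Real.add_one_le_exp (-lam * s)]))
  set K := (∫⁻ ω, ENNReal.ofReal ((-τ 0 ω) ^ (-((1 - 2 * D) * δ))) ∂μ).toReal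
  have hpoisson : ∀ t ∈ Ioc (0 : ℝ) 1, ∫⁻ ω, ENNReal.ofReal ((i t ω : ℝ) ^ δ) ∂μ ≤
      ENNReal.ofReal (lam * Real.exp (2 ^ δ * lam) * t) := fun t ht =>
    (lintegral_natCast_rpow_le_of_poisson (himeas t) (mul_pos hlam ht.1).le
      (mul_le_of_le_one_right hlam.le ht.2) hδ0 fun n => by rw [hpois t ht, neg_mul]).trans_eq
      (by rw [mul_right_comm])
  have hmoment : ∀ t ∈ Ioc (0 : ℝ) 1, ∫⁻ ω, ENNReal.ofReal (I t ω ^ δ) ∂μ ≤ ENNReal.ofReal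
      (((2 * (σ ^ 2 * (2 * D))) ^ δ * K + (2 * σ ^ 2) ^ δ * (lam * Real.exp (2 ^ δ * lam)))
        * t ^ δ) :=
    fun t ht => lintegral_rpow_le_of_le_mul_rpow_add_mul (himeas t) (by positivity)
      (by positivity) ENNReal.toReal_nonneg (by positivity) ht.1 ht.2 hδ0.le hb.le (hbound t ht.1)
      (ENNReal.ofReal_toReal hK.ne).ge (hpoisson t ht)
  exact ⟨⟨_, hmoment⟩, ⟨_, fun t ht => lintegral_ofReal_div_rpow_le ht.1
    ((hbound t ht.1).mono fun ω hω => hω.2.1) (hmoment t ht)⟩⟩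

/-- Uniform integrability lemma: for `0 < δ < 1/(1−2D)` there is a
constant `C < ∞` with `E[I(t)^δ] ≤ C·t^δ` for all `t ∈ (0,1]`; in particular the family
`{I(t)/t : t ∈ (0,1]}` is bounded in `L^δ`. Here `−τ₀ ~ Exp(λ)` and, for each
`t ∈ (0,1]`, `i(t)` is Poisson of mean `λt` and independent of `τ₀`. -/
theorem timeChange_Lp_bounded
    {Ω : Type*} [MeasurableSpace Ω] (μ : Measure Ω) [IsProbabilityMeasure μ]
    (D σ lam : ℝ) (hD : D ∈ Set.Ioo (0 : ℝ) (1/2)) (hσ : 0 < σ) (hlam : 0 < lam)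
    (τ : ℤ → Ω → ℝ) (i : ℝ → Ω → ℕ) (I : ℝ → Ω → ℝ)
    (hτ : ∀ᵐ ω ∂μ, StrictMono (fun n => τ n ω) ∧ τ 0 ω < 0 ∧ 0 < τ 1 ω)
    (hi : ∀ t : ℝ, 0 < t →
      ∀ᵐ ω ∂μ, τ (i t ω) ω ≤ t ∧ t < τ ((i t ω : ℤ) + 1) ω)
    (hIdef : ∀ t : ℝ, 0 < t → ∀ ω,
      I t ω = σ^2 * ((t - τ (i t ω) ω) ^ (2*D)
        + (∑ k ∈ Finset.range (i t ω), (τ ((k : ℤ) + 1) ω - τ (k : ℤ) ω) ^ (2*D))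
        - (-τ 0 ω) ^ (2*D)))
    (hImeas : ∀ t : ℝ, Measurable (I t))
    (hτ0meas : Measurable (τ 0)) (himeas : ∀ t : ℝ, Measurable (i t))
    (hτ0exp : ∀ s : ℝ, 0 ≤ s →
      μ {ω | -τ 0 ω ≤ s} = ENNReal.ofReal (1 - Real.exp (-lam * s)))
    (hindep : ∀ t ∈ Set.Ioc (0 : ℝ) 1, ProbabilityTheory.IndepFun (i t) (τ 0) μ)
    (hpois : ∀ t ∈ Set.Ioc (0 : ℝ) 1, ∀ k : ℕ,
      μ {ω | i t ω = k} = ENNReal.ofReal (Real.exp (-lam * t) * (lam * t)^k / k.factorial))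
    (δ : ℝ) (hδ0 : 0 < δ) (hδ : δ < 1 / (1 - 2*D)) :
    (∃ C : ℝ, ∀ t ∈ Set.Ioc (0 : ℝ) 1,
        ∫⁻ ω, ENNReal.ofReal ((I t ω) ^ δ) ∂μ ≤ ENNReal.ofReal (C * t ^ δ)) ∧
    (∃ M : ℝ, ∀ t ∈ Set.Ioc (0 : ℝ) 1,
        ∫⁻ ω, ENNReal.ofReal ((I t ω / t) ^ δ) ∂μ ≤ ENNReal.ofReal M) :=
  timeChange_Lp_bounded_general μ D σ lam hD hlam τ i I hτ hi hIdef hτ0meas himeas hτ0exp hpois δ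
    hδ0 hδ
end

section
/- Let N₁, N₂ be standard Gaussian random variables and let A, B be nonnegative integrable random variables on the same probability space, such that N₁, N₂ and the pair (A, B) are mutually independent. Then |N₁|·√A, |N₂|·√B, and their product are integrable, and Cov(|N₁|·√A, |N₂|·√B) = (2/π)·Cov(√A, √B). -/
/-!
Write `Uᵢ = |Nᵢ|`, `V₁ = √A` and `V₂ = √B`. Since `U₁ ⟂ U₂` and `(U₁, U₂) ⟂ (V₁, V₂)`, every
expectation in `Cov(U₁V₁, U₂V₂)` splits into a Gaussian factor and an `(A, B)` factor, which
gives `Cov(U₁V₁, U₂V₂) = E U₁ · E U₂ · Cov(V₁, V₂)` with `E |Nᵢ| = √(2/π)`. Integrability of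
`√A`, `√B` and `√A √B` comes from `√A, √B ∈ L²`.
-/

open MeasureTheory ProbabilityTheory Real Set
open scoped NNReal

theorem integral_Ioi_mul_exp_neg_mul_sq {b : ℝ} (hb : 0 < b) :
    ∫ x in Ioi (0 : ℝ), x * exp (-b * x ^ 2) = (2 * b)⁻¹ := by
  have h := integral_mul_cexp_neg_mul_sq (b := (b : ℂ)) (by simpa using hb)
  rw [← Complex.ofReal_inj, ← integral_complex_ofReal]
  push_cast
  exact h

theorem integral_abs_gaussianReal (v : ℝ≥0) :
    ∫ x, |x| ∂gaussianReal 0 v = √(2 * v / π) := by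
  rcases eq_or_ne v 0 with rfl | hv
  · simp
  have hpdf : ∀ x, gaussianPDFReal 0 v x * |x|
      = (√(2 * π * v))⁻¹ * (|x| * exp (-(2 * (v : ℝ))⁻¹ * |x| ^ 2)) := by
    intro x
    rw [gaussianPDFReal_def, sq_abs]
    simp only [sub_zero]
    ring_nf
  rw [integral_gaussianReal_eq_integral_smul hv]
  simp only [smul_eq_mul, hpdf]
  rw [integral_const_mul, integral_comp_abs (f := fun x => x * exp (-(2 * (v : ℝ))⁻¹ * x ^ 2)),
    integral_Ioi_mul_exp_neg_mul_sq (by positivity)]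
  have h2v : 2 * (2 * (2 * (v : ℝ))⁻¹)⁻¹ = √((2 * v) ^ 2) := by
    rw [sqrt_sq (by positivity)]
    field_simp
  rw [h2v, ← sqrt_inv, ← sqrt_mul (by positivity)]
  congr 1
  field_simp

section

variable {Ω : Type*} [MeasurableSpace Ω] {μ : Measure Ω}

theorem ProbabilityTheory.HasLaw.integrable_abs_gaussianReal {X : Ω → ℝ} {v : ℝ≥0}
    (hX : HasLaw X (gaussianReal 0 v) μ) : Integrable (fun ω => |X ω|) μ := by
  have h : Integrable (fun x : ℝ => |x|) (gaussianReal 0 v) :=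
    (memLp_id_gaussianReal 1).integrable le_rfl |>.abs
  rw [← hX.map_eq] at h
  exact (integrable_map_measure measurable_abs.aestronglyMeasurable hX.aemeasurable).mp h

theorem ProbabilityTheory.HasLaw.integral_abs_gaussianReal {X : Ω → ℝ} {v : ℝ≥0}
    (hX : HasLaw X (gaussianReal 0 v) μ) : ∫ ω, |X ω| ∂μ = √(2 * v / π) :=
  (hX.integral_comp measurable_abs.aestronglyMeasurable).trans (_root_.integral_abs_gaussianReal v)

theorem MeasureTheory.Integrable.memLp_two_sqrt {f : Ω → ℝ} (hf : Integrable f μ) :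
    MemLp (fun ω => √(f ω)) 2 μ := by
  have hm : AEStronglyMeasurable (fun ω => √(f ω)) μ :=
    continuous_sqrt.comp_aestronglyMeasurable hf.aestronglyMeasurable
  refine (memLp_two_iff_integrable_sq hm).mpr (hf.abs.mono' (hm.pow 2) (ae_of_all _ fun ω => ?_))
  rw [norm_of_nonneg (sq_nonneg _)]
  rcases le_total 0 (f ω) with h | h
  · rw [sq_sqrt h, abs_of_nonneg h]
  · rw [sqrt_eq_zero'.mpr h]
    simp

variable {U₁ U₂ V₁ V₂ : Ω → ℝ}

theorem integrable_mul_mul_of_indepFun (hU : IndepFun U₁ U₂ μ)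
    (hUV : IndepFun (fun ω => (U₁ ω, U₂ ω)) (fun ω => (V₁ ω, V₂ ω)) μ)
    (hU₁ : Integrable U₁ μ) (hU₂ : Integrable U₂ μ) (hV₁ : Integrable V₁ μ)
    (hV₂ : Integrable V₂ μ) (hV : Integrable (fun ω => V₁ ω * V₂ ω) μ) :
    Integrable (fun ω => U₁ ω * V₁ ω) μ ∧ Integrable (fun ω => U₂ ω * V₂ ω) μ ∧
      Integrable (fun ω => (U₁ ω * V₁ ω) * (U₂ ω * V₂ ω)) μ := by
  refine ⟨(hUV.comp measurable_fst measurable_fst).integrable_mul hU₁ hV₁,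
    (hUV.comp measurable_snd measurable_snd).integrable_mul hU₂ hV₂, ?_⟩
  have hprod := (hUV.comp (measurable_fst.mul measurable_snd)
    (measurable_fst.mul measurable_snd)).integrable_mul (hU.integrable_mul hU₁ hU₂) hV
  exact hprod.congr (ae_of_all _ fun ω => by simp only [Pi.mul_apply, Function.comp_apply]; ring)

theorem integral_mul_mul_sub_eq_of_indepFun (hU : IndepFun U₁ U₂ μ)
    (hUV : IndepFun (fun ω => (U₁ ω, U₂ ω)) (fun ω => (V₁ ω, V₂ ω)) μ)
    (hU₁ : AEStronglyMeasurable U₁ μ) (hU₂ : AEStronglyMeasurable U₂ μ)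
    (hV₁ : AEStronglyMeasurable V₁ μ) (hV₂ : AEStronglyMeasurable V₂ μ) :
    (∫ ω, (U₁ ω * V₁ ω) * (U₂ ω * V₂ ω) ∂μ)
        - (∫ ω, U₁ ω * V₁ ω ∂μ) * (∫ ω, U₂ ω * V₂ ω ∂μ)
      = (∫ ω, U₁ ω ∂μ) * (∫ ω, U₂ ω ∂μ)
          * ((∫ ω, V₁ ω * V₂ ω ∂μ) - (∫ ω, V₁ ω ∂μ) * (∫ ω, V₂ ω ∂μ)) := by
  have h₁ : ∫ ω, U₁ ω * V₁ ω ∂μ = (∫ ω, U₁ ω ∂μ) * ∫ ω, V₁ ω ∂μ :=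
    (hUV.comp measurable_fst measurable_fst).integral_fun_mul_eq_mul_integral hU₁ hV₁
  have h₂ : ∫ ω, U₂ ω * V₂ ω ∂μ = (∫ ω, U₂ ω ∂μ) * ∫ ω, V₂ ω ∂μ :=
    (hUV.comp measurable_snd measurable_snd).integral_fun_mul_eq_mul_integral hU₂ hV₂
  have h₁₂ : ∫ ω, (U₁ ω * V₁ ω) * (U₂ ω * V₂ ω) ∂μ
      = (∫ ω, U₁ ω ∂μ) * (∫ ω, U₂ ω ∂μ) * ∫ ω, V₁ ω * V₂ ω ∂μ := calc
    _ = ∫ ω, (U₁ ω * U₂ ω) * (V₁ ω * V₂ ω) ∂μ := by congr 1 with ω; ring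
    _ = (∫ ω, U₁ ω * U₂ ω ∂μ) * ∫ ω, V₁ ω * V₂ ω ∂μ :=
      (hUV.comp (measurable_fst.mul measurable_snd) (measurable_fst.mul measurable_snd)
        ).integral_fun_mul_eq_mul_integral (hU₁.mul hU₂) (hV₁.mul hV₂)
    _ = _ := by rw [hU.integral_fun_mul_eq_mul_integral hU₁ hU₂]
  rw [h₁, h₂, h₁₂]
  ring

end

theorem cov_abs_gaussian_sqrt_general
    {Ω : Type*} [MeasurableSpace Ω] (μ : Measure Ω) [IsProbabilityMeasure μ]
    (N₁ N₂ A B : Ω → ℝ)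
    (hN₁d : μ.map N₁ = gaussianReal 0 1) (hN₂d : μ.map N₂ = gaussianReal 0 1)
    (hAint : Integrable A μ) (hBint : Integrable B μ)
    (hNindep : IndepFun N₁ N₂ μ)
    (hindep : IndepFun (fun ω => (N₁ ω, N₂ ω)) (fun ω => (A ω, B ω)) μ) :
    Integrable (fun ω => |N₁ ω| * Real.sqrt (A ω)) μ ∧
    Integrable (fun ω => |N₂ ω| * Real.sqrt (B ω)) μ ∧
    Integrable (fun ω => (|N₁ ω| * Real.sqrt (A ω)) * (|N₂ ω| * Real.sqrt (B ω))) μ ∧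
    (∫ ω, (|N₁ ω| * Real.sqrt (A ω)) * (|N₂ ω| * Real.sqrt (B ω)) ∂μ)
        - (∫ ω, |N₁ ω| * Real.sqrt (A ω) ∂μ) * (∫ ω, |N₂ ω| * Real.sqrt (B ω) ∂μ)
      = (2 / Real.pi) * ((∫ ω, Real.sqrt (A ω) * Real.sqrt (B ω) ∂μ)
          - (∫ ω, Real.sqrt (A ω) ∂μ) * (∫ ω, Real.sqrt (B ω) ∂μ)) := by
  have hN₁ : HasLaw N₁ (gaussianReal 0 1) μ :=
    ⟨.of_map_ne_zero (hN₁d ▸ IsProbabilityMeasure.ne_zero _), hN₁d⟩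
  have hN₂ : HasLaw N₂ (gaussianReal 0 1) μ :=
    ⟨.of_map_ne_zero (hN₂d ▸ IsProbabilityMeasure.ne_zero _), hN₂d⟩
  have hU : IndepFun (fun ω => |N₁ ω|) (fun ω => |N₂ ω|) μ :=
    hNindep.comp measurable_abs measurable_abs
  have hUV : IndepFun (fun ω => (|N₁ ω|, |N₂ ω|)) (fun ω => (√(A ω), √(B ω))) μ :=
    hindep.comp (measurable_abs.prodMap measurable_abs)
      (continuous_sqrt.measurable.prodMap continuous_sqrt.measurable)
  have hsA := hAint.memLp_two_sqrt
  have hsB := hBint.memLp_two_sqrt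
  obtain ⟨hA, hB, hAB⟩ := integrable_mul_mul_of_indepFun hU hUV
    hN₁.integrable_abs_gaussianReal hN₂.integrable_abs_gaussianReal
    (hsA.integrable one_le_two) (hsB.integrable one_le_two) (hsA.integrable_mul hsB)
  refine ⟨hA, hB, hAB, ?_⟩
  rw [integral_mul_mul_sub_eq_of_indepFun hU hUV
    hN₁.integrable_abs_gaussianReal.1 hN₂.integrable_abs_gaussianReal.1 hsA.1 hsB.1,
    hN₁.integral_abs_gaussianReal, hN₂.integral_abs_gaussianReal, NNReal.coe_one, mul_one,
    mul_self_sqrt (by positivity)]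

/-- Let `N₁, N₂` be standard Gaussians and `A, B` nonnegative
integrable random variables, with `N₁`, `N₂` and the pair `(A, B)` mutually independent
(equivalently: `N₁ ⟂ N₂` and `(N₁, N₂) ⟂ (A, B)`). Then `|N₁|√A`, `|N₂|√B` and their
product are integrable, and `Cov(|N₁|√A, |N₂|√B) = (2/π)·Cov(√A, √B)`. -/
theorem cov_abs_gaussian_sqrt
    {Ω : Type*} [MeasurableSpace Ω] (μ : Measure Ω) [IsProbabilityMeasure μ]
    (N₁ N₂ A B : Ω → ℝ)
    (hN₁m : Measurable N₁) (hN₂m : Measurable N₂)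
    (hAm : Measurable A) (hBm : Measurable B)
    (hN₁d : μ.map N₁ = gaussianReal 0 1) (hN₂d : μ.map N₂ = gaussianReal 0 1)
    (hA0 : ∀ ω, 0 ≤ A ω) (hB0 : ∀ ω, 0 ≤ B ω)
    (hAint : Integrable A μ) (hBint : Integrable B μ)
    (hNindep : IndepFun N₁ N₂ μ)
    (hindep : IndepFun (fun ω => (N₁ ω, N₂ ω)) (fun ω => (A ω, B ω)) μ) :
    Integrable (fun ω => |N₁ ω| * Real.sqrt (A ω)) μ ∧
    Integrable (fun ω => |N₂ ω| * Real.sqrt (B ω)) μ ∧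
    Integrable (fun ω => (|N₁ ω| * Real.sqrt (A ω)) * (|N₂ ω| * Real.sqrt (B ω))) μ ∧
    (∫ ω, (|N₁ ω| * Real.sqrt (A ω)) * (|N₂ ω| * Real.sqrt (B ω)) ∂μ)
        - (∫ ω, |N₁ ω| * Real.sqrt (A ω) ∂μ) * (∫ ω, |N₂ ω| * Real.sqrt (B ω) ∂μ)
      = (2 / Real.pi) * ((∫ ω, Real.sqrt (A ω) * Real.sqrt (B ω) ∂μ)
          - (∫ ω, Real.sqrt (A ω) ∂μ) * (∫ ω, Real.sqrt (B ω) ∂μ)) :=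
  cov_abs_gaussian_sqrt_general μ N₁ N₂ A B hN₁d hN₂d hAint hBint hNindep hindep
end

section
/- For q ∈ [0, ∞), the integral ∫_ℝ |x|^q f(x) dx is finite if and only if q < (1/2 − D)^{−1}. -/
/-!
For fixed `t` the integrand of `f` is, in `x`, a centred Gaussian of variance proportional to
`t ^ (2D - 1)`, so its `q`-th absolute moment is `C · t ^ (-(1/2 - D) q) · e^{-λt}` with `C > 0`
(Gamma-function formula). By Tonelli the `q`-th absolute moment of `f` is therefore
`C ∫₀^∞ t ^ (-(1/2 - D) q) e^{-λt} dt`, which is finite exactly when the singularity at `t = 0`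
is integrable, i.e. when `(1/2 - D) q < 1`.
-/

open MeasureTheory Set Real

theorem integrable_abs_rpow_mul_exp_neg_mul_sq {b q : ℝ} (hb : 0 < b) (hq : -1 < q) :
    Integrable fun x : ℝ => |x| ^ q * exp (-b * x ^ 2) := by
  have hIoi : IntegrableOn (fun x : ℝ => |x| ^ q * exp (-b * x ^ 2)) (Ioi 0) :=
    (integrableOn_rpow_mul_exp_neg_mul_sq hb hq).congr_fun
      (fun x hx => by rw [abs_of_pos hx]) measurableSet_Ioi
  rw [← integrableOn_univ, ← Iio_union_Ici (a := (0 : ℝ)), integrableOn_union,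
    integrableOn_Ici_iff_integrableOn_Ioi]
  refine ⟨?_, hIoi⟩
  rw [← (Measure.measurePreserving_neg (volume : Measure ℝ)).integrableOn_comp_preimage
      (Homeomorph.neg ℝ).measurableEmbedding]
  simpa only [Function.comp_def, neg_sq, neg_preimage, neg_Iio, neg_zero, abs_neg] using hIoi

theorem integral_abs_rpow_mul_exp_neg_mul_sq {b q : ℝ} (hb : 0 < b) (hq : -1 < q) :
    ∫ x : ℝ, |x| ^ q * exp (-b * x ^ 2) = Gamma ((q + 1) / 2) * b ^ (-(q + 1) / 2) := by
  have h := integral_rpow_mul_exp_neg_mul_rpow two_pos hq hb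
  simp only [rpow_two] at h
  calc ∫ x : ℝ, |x| ^ q * exp (-b * x ^ 2) = ∫ x : ℝ, |x| ^ q * exp (-b * |x| ^ 2) := by
        simp only [sq_abs]
    _ = _ := by rw [integral_comp_abs (f := fun y => y ^ q * exp (-b * y ^ 2)), h]; ring

theorem lintegral_ofReal_abs_rpow_mul_exp_neg_mul_sq {b q : ℝ} (hb : 0 < b) (hq : -1 < q) :
    ∫⁻ x : ℝ, ENNReal.ofReal (|x| ^ q * exp (-b * x ^ 2)) =
      ENNReal.ofReal (Gamma ((q + 1) / 2) * b ^ (-(q + 1) / 2)) := by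
  rw [← integral_abs_rpow_mul_exp_neg_mul_sq hb hq, ofReal_integral_eq_lintegral_ofReal
    (integrable_abs_rpow_mul_exp_neg_mul_sq hb hq) (ae_of_all _ fun x => by positivity)]

theorem integrableOn_Ioi_rpow_mul_exp_neg_mul_iff {b r : ℝ} (hb : 0 < b) :
    IntegrableOn (fun t : ℝ => t ^ r * exp (-b * t)) (Ioi 0) ↔ -1 < r := by
  refine ⟨fun h => ?_, fun hr => by
    simpa only [rpow_one] using integrableOn_rpow_mul_exp_neg_mul_rpow hr one_pos hb⟩
  rw [← intervalIntegral.integrableOn_Ioo_rpow_iff one_pos]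
  -- on `(0, 1)` the exponential factor is bounded below by `exp (-b)`
  refine ((h.mono_set Ioo_subset_Ioi_self).const_mul (exp b)).mono'
    (by fun_prop : Measurable fun t : ℝ => t ^ r).aestronglyMeasurable ?_
  filter_upwards [ae_restrict_mem measurableSet_Ioo] with t ⟨ht0, ht1⟩
  rw [norm_of_nonneg (rpow_nonneg ht0.le _)]
  calc t ^ r = exp b * (t ^ r * exp (-b)) := by rw [exp_neg]; field_simp
    _ ≤ exp b * (t ^ r * exp (-b * t)) := by gcongr; nlinarith

theorem integrable_integral_iff_lintegral_lintegral_ne_top {α β : Type*} [MeasurableSpace α]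
    [MeasurableSpace β] {μ : Measure α} {ν : Measure β} [SFinite μ] [SFinite ν]
    {k : α → β → ℝ} (hk : Measurable (Function.uncurry k)) (hk_nonneg : ∀ x, 0 ≤ᵐ[ν] k x)
    (hk_int : ∀ x, Integrable (k x) ν) :
    Integrable (fun x => ∫ t, k x t ∂ν) μ ↔ ∫⁻ t, ∫⁻ x, ENNReal.ofReal (k x t) ∂μ ∂ν ≠ ⊤ := by
  rw [← lintegral_ofReal_ne_top_iff_integrable
    (hk.stronglyMeasurable.integral_prod_right).aestronglyMeasurable
    (ae_of_all _ fun x => integral_nonneg_of_ae (hk_nonneg x))]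
  simp_rw [fun x => ofReal_integral_eq_lintegral_ofReal (hk_int x) (hk_nonneg x)]
  rw [lintegral_lintegral_swap hk.ennreal_ofReal.aemeasurable]

/-- For fixed `t`, `x ↦ mixtureKernel D lam σ x t` is `lam * exp (-lam * t)` times the centred
Gaussian density of variance `2 D σ² t ^ (2 D - 1)`. -/
noncomputable def mixtureKernel (D lam σ x t : ℝ) : ℝ :=
  lam * exp (-lam * t) * (t ^ (1/2 - D) / (σ * √(4 * D * π)))
    * exp (-(t ^ (1 - 2*D) * x^2) / (4*D*σ^2))

section mixtureKernel

variable {D lam σ q t : ℝ}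

theorem mixtureKernel_nonneg (hlam : 0 ≤ lam) (hσ : 0 ≤ σ) (x : ℝ) (ht : 0 ≤ t) :
    0 ≤ mixtureKernel D lam σ x t := by
  unfold mixtureKernel
  positivity

theorem mixtureKernel_le (hD : 0 ≤ D) (hlam : 0 ≤ lam) (hσ : 0 ≤ σ) (x : ℝ) (ht : 0 ≤ t) :
    mixtureKernel D lam σ x t ≤ lam / (σ * √(4 * D * π)) * (t ^ (1/2 - D) * exp (-lam * t)) := by
  have hexp : exp (-(t ^ (1 - 2*D) * x^2) / (4*D*σ^2)) ≤ 1 := by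
    rw [exp_le_one_iff, neg_div, neg_nonpos]
    positivity
  calc mixtureKernel D lam σ x t ≤ lam * exp (-lam * t) * (t ^ (1/2 - D) / (σ * √(4 * D * π))) :=
        mul_le_of_le_one_right (by positivity) hexp
    _ = _ := by ring

theorem integrableOn_mixtureKernel (hD₀ : 0 ≤ D) (hD : D < 3 / 2) (hlam : 0 < lam) (hσ : 0 ≤ σ)
    (x : ℝ) : IntegrableOn (mixtureKernel D lam σ x) (Ioi 0) := by
  have hdom := ((integrableOn_Ioi_rpow_mul_exp_neg_mul_iff (r := 1/2 - D) hlam).2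
    (by linarith)).const_mul (lam / (σ * √(4 * D * π)))
  refine hdom.mono' (by unfold mixtureKernel; fun_prop) ?_
  filter_upwards [ae_restrict_mem measurableSet_Ioi] with t ht
  rw [norm_of_nonneg (mixtureKernel_nonneg hlam.le hσ x (le_of_lt ht))]
  exact mixtureKernel_le hD₀ hlam.le hσ x (le_of_lt ht)

theorem lintegral_abs_rpow_mul_mixtureKernel (hD : 0 < D) (hlam : 0 ≤ lam) (hσ : 0 < σ)
    (hq : -1 < q) (ht : 0 < t) :
    ∫⁻ x, ENNReal.ofReal (|x| ^ q * mixtureKernel D lam σ x t) =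
      ENNReal.ofReal (lam / (σ * √(4 * D * π)) * (4 * D * σ ^ 2) ^ ((q + 1) / 2) *
        Gamma ((q + 1) / 2) * (t ^ (-(1/2 - D) * q) * exp (-lam * t))) := by
  have hsplit : ∀ x : ℝ, |x| ^ q * mixtureKernel D lam σ x t =
      lam * exp (-lam * t) * (t ^ (1/2 - D) / (σ * √(4 * D * π))) *
        (|x| ^ q * exp (-(t ^ (1 - 2*D) / (4*D*σ^2)) * x ^ 2)) := by
    intro x
    rw [mixtureKernel, show -(t ^ (1 - 2*D) / (4*D*σ^2)) * x ^ 2 =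
      -(t ^ (1 - 2*D) * x ^ 2) / (4*D*σ^2) by ring]
    ring
  simp_rw [hsplit, ENNReal.ofReal_mul (by positivity : 0 ≤ lam * exp (-lam * t) *
    (t ^ (1/2 - D) / (σ * √(4 * D * π))))]
  rw [lintegral_const_mul' _ _ ENNReal.ofReal_ne_top,
    lintegral_ofReal_abs_rpow_mul_exp_neg_mul_sq (by positivity) hq,
    ← ENNReal.ofReal_mul (by positivity)]
  congr 1
  have hK : 0 < 4 * D * σ ^ 2 := by positivity
  have hexp : t ^ (-(1/2 - D) * q) = t ^ (1/2 - D) * t ^ ((1 - 2*D) * -((q + 1) / 2)) := by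
    rw [← rpow_add ht]
    ring_nf
  rw [div_rpow (by positivity) hK.le, ← rpow_mul ht.le, neg_div, rpow_neg hK.le, hexp]
  field_simp

end mixtureKernel

/-- For the mixture-of-Gaussians density
`f(x) = ∫_0^∞ λe^{−λt}·t^{1/2−D}/(σ√(4Dπ))·exp(−t^{1−2D}x²/(4Dσ²)) dt`
and `q ∈ [0,∞)`, the integral `∫_ℝ |x|^q f(x) dx` is finite iff `q < (1/2 − D)⁻¹`. -/
theorem scaling_density_moment_finite_iff
    (D lam σ : ℝ) (hD : D ∈ Set.Ioo (0 : ℝ) (1/2)) (hlam : 0 < lam) (hσ : 0 < σ)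
    (f : ℝ → ℝ)
    (hf : ∀ x : ℝ, f x = ∫ t in Set.Ioi (0 : ℝ),
      lam * Real.exp (-lam * t) * (t ^ (1/2 - D) / (σ * Real.sqrt (4*D*Real.pi)))
        * Real.exp (-(t ^ (1 - 2*D) * x^2) / (4*D*σ^2)))
    (q : ℝ) (hq : 0 ≤ q) :
    Integrable (fun x : ℝ => |x| ^ q * f x) ↔ q < (1/2 - D)⁻¹ := by
  obtain ⟨hD₀, hD₁⟩ := hD
  have hq' : -1 < q := by linarith
  have hmoment : (fun x => |x| ^ q * f x) =
      fun x => ∫ t in Ioi 0, |x| ^ q * mixtureKernel D lam σ x t := by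
    funext x
    rw [hf x, integral_const_mul]
    rfl
  have hC : 0 < lam / (σ * √(4 * D * π)) * (4 * D * σ ^ 2) ^ ((q + 1) / 2) *
      Gamma ((q + 1) / 2) := by positivity
  rw [hmoment, integrable_integral_iff_lintegral_lintegral_ne_top
      (k := fun x t => |x| ^ q * mixtureKernel D lam σ x t)
      (by unfold mixtureKernel; fun_prop)
      (fun x => ae_restrict_of_forall_mem measurableSet_Ioi fun t ht =>
        mul_nonneg (by positivity) (mixtureKernel_nonneg hlam.le hσ.le x (le_of_lt ht)))
      (fun x => (integrableOn_mixtureKernel hD₀.le (by linarith) hlam hσ.le x).const_mul _),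
    setLIntegral_congr_fun measurableSet_Ioi fun t ht =>
      lintegral_abs_rpow_mul_mixtureKernel hD₀ hlam.le hσ hq' ht,
    lintegral_ofReal_ne_top_iff_integrable (by fun_prop)
      (ae_restrict_of_forall_mem measurableSet_Ioi fun t (ht : 0 < t) => by positivity),
    integrable_const_mul_iff hC.ne'.isUnit, ← IntegrableOn,
    integrableOn_Ioi_rpow_mul_exp_neg_mul_iff hlam, ← one_div, lt_div_iff₀ (by linarith)]
  constructor <;> intro h <;> linarith
end

section
/- Define w(t) := 2Dσ²·(t − τ)^{2D−1} for t > τ. Then w is differentiable on (τ, ∞) and satisfies w′(t) = −α·w(t)^γ for all t > τ, where γ := 2 + 2D/(1 − 2D) and α := (1 − 2D)/((2D)^{1/(1−2D)}·σ^{2/(1−2D)}). -/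
/-! A power law `w(t) = c (t - τ)^β` satisfies `w' = c β (t - τ)^(β - 1)`, and `(t - τ)^(β - 1)`
is `w^γ / c^γ` for `γ = 1 - 1/β`; hence `w' = β c^(1/β) w^(1 - 1/β)`. With `c = 2Dσ²` and
`β = 2D - 1` this is the stated ODE, since `1 - 1/(2D - 1) = 2 + 2D/(1 - 2D)` and
`(2D - 1) c^(1/(2D - 1)) = -(1 - 2D) / c^(1/(1 - 2D))`. -/

open Real

theorem hasDerivAt_const_mul_rpow_sub_eq_rpow {c β τ t : ℝ} (hc : 0 ≤ c) (hβ : β ≠ 0)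
    (ht : τ < t) :
    HasDerivAt (fun s : ℝ => c * (s - τ) ^ β)
      (β * c ^ (1 / β) * (c * (t - τ) ^ β) ^ (1 - 1 / β)) t := by
  have hx : 0 < t - τ := sub_pos.mpr ht
  have hderiv := (((hasDerivAt_id t).sub_const τ).rpow_const (p := β) (Or.inl hx.ne')).const_mul c
  refine hderiv.congr_deriv ?_
  have hexp : β * (1 - 1 / β) = β - 1 := by field_simp
  calc c * (1 * β * (id t - τ) ^ (β - 1))
      = β * (c ^ (1 / β) * c ^ (1 - 1 / β)) * (t - τ) ^ (β * (1 - 1 / β)) := by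
        rw [← rpow_add' hc (by ring_nf; exact one_ne_zero), hexp]
        simp only [id, add_sub_cancel, rpow_one]
        ring
    _ = β * c ^ (1 / β) * (c * (t - τ) ^ β) ^ (1 - 1 / β) := by
        rw [mul_rpow hc (rpow_nonneg hx.le _), ← rpow_mul hx.le]
        ring

/-- The squared volatility `w(t) = 2Dσ²(t − τ)^{2D−1}` is
differentiable on `(τ, ∞)` and solves the nonlinear mean-reverting ODE
`w′(t) = −α·w(t)^γ`, with `γ = 2 + 2D/(1−2D)` and
`α = (1−2D)/((2D)^{1/(1−2D)}·σ^{2/(1−2D)})`. -/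
theorem squared_volatility_solves_ODE
    (D σ τ : ℝ) (hD : D ∈ Set.Ioo (0 : ℝ) (1/2)) (hσ : 0 < σ) :
    ∀ t : ℝ, τ < t →
      HasDerivAt (fun s : ℝ => 2*D*σ^2 * (s - τ) ^ (2*D - 1))
        (-((1 - 2*D) / ((2*D) ^ (1 / (1 - 2*D)) * σ ^ (2 / (1 - 2*D))))
          * (2*D*σ^2 * (t - τ) ^ (2*D - 1)) ^ (2 + 2*D / (1 - 2*D))) t := by
  intro t ht
  obtain ⟨hD0, hD1⟩ := hD
  have hgap : 1 - 2*D ≠ 0 := by linarith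
  have hβ : 2*D - 1 ≠ 0 := by linarith
  have hγ : 1 - 1 / (2*D - 1) = 2 + 2*D / (1 - 2*D) := by field_simp; ring
  have hα : (2*D - 1) * (2*D*σ^2) ^ (1 / (2*D - 1))
      = -((1 - 2*D) / ((2*D) ^ (1 / (1 - 2*D)) * σ ^ (2 / (1 - 2*D)))) := by
    have hexp : 1 / (2*D - 1) = -(1 / (1 - 2*D)) := by field_simp; ring
    rw [hexp, rpow_neg (by positivity), mul_rpow (by positivity) (by positivity),
      ← rpow_natCast_mul hσ.le]
    push_cast
    rw [mul_one_div]
    field_simp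
    ring
  have h := hasDerivAt_const_mul_rpow_sub_eq_rpow (c := 2*D*σ^2) (by positivity) hβ ht
  rwa [hγ, hα] at h
end
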